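/- arXiv:1309.1553 — 7 statements merged into one kernel-verified Lean document; each statement's English description precedes it below -/
import Mathlib

section
/- Let D be a digraph whose connected components are D_1,...,D_k, let G_1 be any digraph, and let G be the disjoint union of G_1 and D_2,...,D_k. If G contains an induced subdivision of D, then G_1 contains an induced subdivision of D_1. Conversely, if G_1 contains an induced subdivision of D_1, then G contains an induced subdivision of D. -/
/-!
An induced subdivision of `D` in `G` splits over the components of `D`: the part over a
component is connected, so it lies in `G₁` or in a single copy of some `D_j`, where it is an
induced subdivision of that component. Follow `D₁` to the part of `G` receiving it, then the
component of `D` that part is a copy of, and so on. Branch vertices are distinct, so the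
components received by the copy of `D_j` have at most `|D_j|` vertices in total; were the chain
never to reach `G₁`, the components along it would fit into their own copies with `D₁` left
over. Since a subdivision of a subdivision is a subdivision (concatenate the paths), `G₁`
contains an induced subdivision of `D₁`. Conversely, such a subdivision together with
`D₂, …, D_k` themselves is an induced subdivision of `D` in `G`.
-/

/-- `S` is a subdivision of `D` realized via the injection `φ` of branch vertices:
each arc `u → v` of `D` is replaced by a directed `(φ u, φ v)`-path `p u v h` of length
`n u v h ≥ 1`; the paths are internally disjoint, their internal vertices are new,
every vertex of `S` lies on some path, and the arcs of `S` are exactly the path arcs. -/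
def IsSubdivisionVia {U W : Type*} (D : U → U → Prop) (S : W → W → Prop)
    (φ : U → W) (n : ∀ u v, D u v → ℕ)
    (p : ∀ u v (h : D u v), Fin (n u v h + 1) → W) : Prop :=
  Function.Injective φ ∧
  (∀ u v (h : D u v), 1 ≤ n u v h) ∧
  (∀ u v (h : D u v), p u v h 0 = φ u ∧ p u v h (Fin.last _) = φ v) ∧
  (∀ u v (h : D u v), Function.Injective (p u v h)) ∧
  (∀ u v (h : D u v) (i : Fin (n u v h + 1)),
      0 < i.val → i.val < n u v h → ∀ z, p u v h i ≠ φ z) ∧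
  (∀ u v (h : D u v) u' v' (h' : D u' v') (i : Fin (n u v h + 1))
      (j : Fin (n u' v' h' + 1)),
      0 < i.val → i.val < n u v h → 0 < j.val → j.val < n u' v' h' →
      p u v h i = p u' v' h' j → u = u' ∧ v = v' ∧ i.val = j.val) ∧
  (∀ w : W, (∃ u, φ u = w) ∨ ∃ u, ∃ v, ∃ h : D u v, ∃ i, p u v h i = w) ∧
  (∀ a b : W, S a b ↔ ∃ u, ∃ v, ∃ h : D u v, ∃ i : Fin (n u v h),
      p u v h i.castSucc = a ∧ p u v h i.succ = b)

/-- `S` is a subdivision of the digraph `D`. -/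
def IsSubdivision {U W : Type*} (D : U → U → Prop) (S : W → W → Prop) : Prop :=
  ∃ φ n p, IsSubdivisionVia D S φ n p

/-- The digraph `G` contains an induced subdivision of `D`: some vertex subset of `G`
induces a subdivision of `D`. -/
def ContainsInducedSubdivision {U W : Type*} (D : U → U → Prop) (G : W → W → Prop) : Prop :=
  ∃ X : Set W, IsSubdivision D (fun a b : X => G a.1 b.1)

/-- The digraph obtained from a digraph `G₁` (on `C`) and the restriction of `D` to `B`
by taking their disjoint union (no arcs between the two sides). -/
def glue {C B : Type*} (G₁ : C → C → Prop) (DB : B → B → Prop) :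
    C ⊕ B → C ⊕ B → Prop := fun p q =>
  match p, q with
  | Sum.inl x, Sum.inl y => G₁ x y
  | Sum.inr x, Sum.inr y => DB x y
  | _, _ => False

def subdivPiece {U W : Type*} {D : U → U → Prop} {n : ∀ u v, D u v → ℕ} (φ : U → W)
    (p : ∀ u v (h : D u v), Fin (n u v h + 1) → W) (Y : Set U) : Set W :=
  {w | (∃ u ∈ Y, φ u = w) ∨
    ∃ u v, ∃ h : D u v, ∃ i, u ∈ Y ∧ v ∈ Y ∧ p u v h i = w}

namespace IsSubdivisionVia

variable {U W : Type*} {D : U → U → Prop} {S : W → W → Prop} {φ : U → W}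
  {n : ∀ u v, D u v → ℕ} {p : ∀ u v (h : D u v), Fin (n u v h + 1) → W}
  (H : IsSubdivisionVia D S φ n p)
include H

theorem injective : Function.Injective φ := H.1

theorem one_le {u v : U} (h : D u v) : 1 ≤ n u v h := H.2.1 u v h

theorem path_zero {u v : U} (h : D u v) : p u v h 0 = φ u := (H.2.2.1 u v h).1

theorem path_last {u v : U} (h : D u v) : p u v h (Fin.last _) = φ v := (H.2.2.1 u v h).2

theorem path_injective {u v : U} (h : D u v) : Function.Injective (p u v h) := H.2.2.2.1 u v h

theorem path_ne_branch {u v : U} (h : D u v) {i : Fin (n u v h + 1)} (h0 : 0 < (i : ℕ))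
    (hl : (i : ℕ) < n u v h) (z : U) : p u v h i ≠ φ z :=
  H.2.2.2.2.1 u v h i h0 hl z

theorem eq_of_path_eq {u v u' v' : U} {h : D u v} {h' : D u' v'} {i : Fin (n u v h + 1)}
    {i' : Fin (n u' v' h' + 1)} (h0 : 0 < (i : ℕ)) (hl : (i : ℕ) < n u v h)
    (h0' : 0 < (i' : ℕ)) (hl' : (i' : ℕ) < n u' v' h') (e : p u v h i = p u' v' h' i') :
    u = u' ∧ v = v' ∧ (i : ℕ) = i' :=
  H.2.2.2.2.2.1 u v h u' v' h' i i' h0 hl h0' hl' e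

theorem cover (w : W) : (∃ u, φ u = w) ∨ ∃ u v, ∃ h : D u v, ∃ i, p u v h i = w :=
  H.2.2.2.2.2.2.1 w

theorem adj_iff (a b : W) :
    S a b ↔ ∃ u v, ∃ h : D u v, ∃ i : Fin (n u v h),
      p u v h i.castSucc = a ∧ p u v h i.succ = b :=
  H.2.2.2.2.2.2.2 a b

theorem adj_path {u v : U} (h : D u v) (i : Fin (n u v h)) :
    S (p u v h i.castSucc) (p u v h i.succ) :=
  (H.adj_iff _ _).2 ⟨u, v, h, i, rfl, rfl⟩

theorem eq_branch_of_path_eq {u v z : U} {h : D u v} {i : Fin (n u v h + 1)}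
    (e : p u v h i = φ z) : i = 0 ∧ z = u ∨ i = Fin.last _ ∧ z = v := by
  by_cases h0 : i = 0
  · exact .inl ⟨h0, H.injective (by rw [← e, h0, H.path_zero])⟩
  by_cases hl : i = Fin.last _
  · exact .inr ⟨hl, H.injective (by rw [← e, hl, H.path_last])⟩
  exact (H.path_ne_branch h (Fin.pos_iff_ne_zero.2 h0) (Fin.val_lt_last hl) z e).elim

theorem eq_or_exists_branch_of_path_eq {u v u' v' : U} {h : D u v} {h' : D u' v'}
    {i : Fin (n u v h + 1)} {i' : Fin (n u' v' h' + 1)} (e : p u v h i = p u' v' h' i') :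
    (u = u' ∧ v = v' ∧ (i : ℕ) = i') ∨ ∃ z, p u v h i = φ z := by
  by_cases h0 : i = 0
  · exact .inr ⟨u, by rw [h0, H.path_zero]⟩
  by_cases hl : i = Fin.last _
  · exact .inr ⟨v, by rw [hl, H.path_last]⟩
  by_cases h0' : i' = 0
  · exact .inr ⟨u', by rw [e, h0', H.path_zero]⟩
  by_cases hl' : i' = Fin.last _
  · exact .inr ⟨v', by rw [e, hl', H.path_last]⟩
  exact .inl (H.eq_of_path_eq (Fin.pos_iff_ne_zero.2 h0) (Fin.val_lt_last hl)
    (Fin.pos_iff_ne_zero.2 h0') (Fin.val_lt_last hl') e)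

theorem eq_of_path_arc_eq {u v u' v' : U} {h : D u v} {h' : D u' v'} {i : Fin (n u v h)}
    {i' : Fin (n u' v' h')} (e₁ : p u v h i.castSucc = p u' v' h' i'.castSucc)
    (e₂ : p u v h i.succ = p u' v' h' i'.succ) : u = u' ∧ v = v' ∧ (i : ℕ) = i' := by
  rcases H.eq_or_exists_branch_of_path_eq e₂ with ⟨rfl, rfl, hi⟩ | ⟨z, hz⟩
  · exact ⟨rfl, rfl, by simpa using hi⟩
  obtain ⟨-, rfl⟩ := (H.eq_branch_of_path_eq hz).resolve_left fun h0 => Fin.succ_ne_zero _ h0.1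
  obtain ⟨-, hv⟩ := (H.eq_branch_of_path_eq (e₂ ▸ hz)).resolve_left
    fun h0 => Fin.succ_ne_zero _ h0.1
  rcases H.eq_or_exists_branch_of_path_eq e₁ with ⟨rfl, -, hi⟩ | ⟨z', hz'⟩
  · exact ⟨rfl, hv, by simpa using hi⟩
  obtain ⟨h0, rfl⟩ := (H.eq_branch_of_path_eq hz').resolve_right
    fun hl => Fin.castSucc_ne_last _ hl.1
  obtain ⟨h0', hu⟩ := (H.eq_branch_of_path_eq (e₁ ▸ hz')).resolve_right
    fun hl => Fin.castSucc_ne_last _ hl.1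
  exact ⟨hu, hv, by rw [← Fin.val_castSucc i, h0, ← Fin.val_castSucc i', h0']; rfl⟩

theorem apply_path_eq {β : Type*} {f : W → β} (hf : ∀ a b, S a b → f a = f b) {u v : U}
    (h : D u v) (i : Fin (n u v h + 1)) : f (p u v h i) = f (φ u) := by
  induction i using Fin.induction with
  | zero => rw [H.path_zero]
  | succ i ih => rw [← hf _ _ (H.adj_path h i), ih]

theorem apply_eq_of_adj {β : Type*} {f : W → β} (hf : ∀ a b, S a b → f a = f b) {u v : U}
    (h : D u v) : f (φ u) = f (φ v) := by
  rw [← H.path_last h, H.apply_path_eq hf]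

theorem apply_eq_of_reflTransGen {α β : Type*} {f : W → β} (hf : ∀ a b, S a b → f a = f b)
    {r : α → α → Prop} (g : α → U)
    (hr : ∀ x y, r x y → D (g x) (g y) ∨ D (g y) (g x)) {x y : α}
    (hxy : Relation.ReflTransGen r x y) : f (φ (g x)) = f (φ (g y)) := by
  induction hxy with
  | refl => rfl
  | tail _ hyz ih =>
    exact ih.trans <| (hr _ _ hyz).elim (H.apply_eq_of_adj hf) fun h =>
      (H.apply_eq_of_adj hf h).symm

theorem exists_apply_eq_of_mem_subdivPiece {β : Type*} {f : W → β}
    (hf : ∀ a b, S a b → f a = f b) {Y : Set U} {w : W} (hw : w ∈ subdivPiece φ p Y) :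
    ∃ u ∈ Y, f w = f (φ u) := by
  rcases hw with ⟨u, hu, rfl⟩ | ⟨u, v, h, i, hu, -, rfl⟩
  exacts [⟨u, hu, rfl⟩, ⟨u, hu, H.apply_path_eq hf h i⟩]

theorem mem_of_path_mem_subdivPiece {Y : Set U} {u v : U} {h : D u v} {i : Fin (n u v h + 1)}
    (hi : p u v h i ∈ subdivPiece φ p Y) :
    (i ≠ Fin.last _ → u ∈ Y) ∧ (i ≠ 0 → v ∈ Y) := by
  have key : (u ∈ Y ∧ v ∈ Y) ∨ ∃ z ∈ Y, p u v h i = φ z := by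
    rcases hi with ⟨z, hz, e⟩ | ⟨u', v', h', i', hu', hv', e⟩
    · exact .inr ⟨z, hz, e.symm⟩
    rcases H.eq_or_exists_branch_of_path_eq e.symm with ⟨rfl, rfl, -⟩ | ⟨z, hz⟩
    · exact .inl ⟨hu', hv'⟩
    refine .inr ⟨z, ?_, hz⟩
    rcases H.eq_branch_of_path_eq (e.trans hz) with ⟨-, rfl⟩ | ⟨-, rfl⟩
    exacts [hu', hv']
  rcases key with ⟨hu, hv⟩ | ⟨z, hz, e⟩
  · exact ⟨fun _ => hu, fun _ => hv⟩
  rcases H.eq_branch_of_path_eq e with ⟨h0, rfl⟩ | ⟨hl, rfl⟩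
  · exact ⟨fun _ => hz, fun h0' => (h0' h0).elim⟩
  · exact ⟨fun hl' => (hl' hl).elim, fun _ => hz⟩

theorem restrict {U' : Type*} {D' : U' → U' → Prop} (g : D' ↪r D) :
    IsSubdivision D' (fun a b : subdivPiece φ p (Set.range g) => S a b) := by
  refine ⟨fun a => ⟨φ (g a), .inl ⟨g a, ⟨a, rfl⟩, rfl⟩⟩,
    fun a b h => n (g a) (g b) (g.map_rel_iff.2 h),
    fun a b h i => ⟨p _ _ (g.map_rel_iff.2 h) i,
      .inr ⟨_, _, _, i, ⟨a, rfl⟩, ⟨b, rfl⟩, rfl⟩⟩,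
    fun a b e => g.injective (H.injective (congrArg Subtype.val e)),
    fun a b h => H.one_le _,
    fun a b h => ⟨Subtype.ext (H.path_zero _), Subtype.ext (H.path_last _)⟩,
    fun a b h i j e => H.path_injective _ (congrArg Subtype.val e),
    fun a b h i h0 hl z e => H.path_ne_branch _ h0 hl (g z) (congrArg Subtype.val e),
    fun a b h a' b' h' i j h0 hl h0' hl' e => ?_, ?_, fun x y => ⟨fun hxy => ?_, ?_⟩⟩
  · obtain ⟨hu, hv, hi⟩ := H.eq_of_path_eq h0 hl h0' hl' (congrArg Subtype.val e)
    exact ⟨g.injective hu, g.injective hv, hi⟩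
  · rintro ⟨w, ⟨_, ⟨a, rfl⟩, rfl⟩ | ⟨_, _, h, i, ⟨a, rfl⟩, ⟨b, rfl⟩, rfl⟩⟩
    exacts [.inl ⟨a, rfl⟩, .inr ⟨a, b, g.map_rel_iff.1 h, i, rfl⟩]
  · obtain ⟨u, v, h, i, e₁, e₂⟩ := (H.adj_iff _ _).1 hxy
    obtain ⟨a, rfl⟩ := (H.mem_of_path_mem_subdivPiece (e₁ ▸ x.2)).1 (Fin.castSucc_ne_last i)
    obtain ⟨b, rfl⟩ := (H.mem_of_path_mem_subdivPiece (e₂ ▸ y.2)).2 (Fin.succ_ne_zero i)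
    exact ⟨a, b, g.map_rel_iff.1 h, i, Subtype.ext e₁, Subtype.ext e₂⟩
  · rintro ⟨a, b, h, i, rfl, rfl⟩
    exact H.adj_path _ i

end IsSubdivisionVia

section Host

variable {U W W' V : Type*} {D : U → U → Prop} {S : W → W → Prop}

theorem IsSubdivision.of_relIso {S' : W' → W' → Prop} (H : IsSubdivision D S) (e : S ≃r S') :
    IsSubdivision D S' := by
  obtain ⟨φ, n, p, H⟩ := H
  refine ⟨fun u => e (φ u), n, fun u v h i => e (p u v h i), e.injective.comp H.injective,
    fun u v h => H.one_le h,
    fun u v h => ⟨congrArg e (H.path_zero h), congrArg e (H.path_last h)⟩,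
    fun u v h => e.injective.comp (H.path_injective h),
    fun u v h i h0 hl z hz => H.path_ne_branch h h0 hl z (e.injective hz),
    fun u v h u' v' h' i j h0 hl h0' hl' e' => H.eq_of_path_eq h0 hl h0' hl' (e.injective e'),
    fun w => ?_, fun a b => ?_⟩
  · rcases H.cover (e.symm w) with ⟨u, hu⟩ | ⟨u, v, h, i, hi⟩
    · exact .inl ⟨u, by simp [hu]⟩
    · exact .inr ⟨u, v, h, i, by simp [hi]⟩
  · rw [← e.apply_symm_apply a, ← e.apply_symm_apply b, e.map_rel_iff, H.adj_iff]
    simp only [e.injective.eq_iff]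

theorem IsSubdivision.containsInducedSubdivision {G : V → V → Prop} (H : IsSubdivision D S)
    (f : S ↪r G) : ContainsInducedSubdivision D G :=
  ⟨Set.range f, H.of_relIso ⟨Equiv.ofInjective f f.injective, f.map_rel_iff⟩⟩

theorem IsSubdivision.containsInducedSubdivision_of_range_subset {G : V → V → Prop}
    {G' : W' → W' → Prop} (H : IsSubdivision D S) (f : S ↪r G') (e : G ↪r G')
    (hf : Set.range f ⊆ Set.range e) : ContainsInducedSubdivision D G := by
  choose g hg using fun w => hf ⟨w, rfl⟩
  refine H.containsInducedSubdivision ⟨⟨g, fun a b hab => f.injective ?_⟩, fun {a b} => ?_⟩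
  · rw [← hg a, ← hg b, hab]
  · show G (g a) (g b) ↔ S a b
    rw [← e.map_rel_iff, hg, hg, f.map_rel_iff]

theorem IsSubdivisionVia.containsInducedSubdivision_of_subdivPiece_subset {U' : Type*}
    {D' : U' → U' → Prop} {G : V → V → Prop} {G' : W' → W' → Prop} {X : Set V}
    {φ : U → X} {n : ∀ u v, D u v → ℕ} {p : ∀ u v (h : D u v), Fin (n u v h + 1) → X}
    (H : IsSubdivisionVia D (fun a b : X => G a.1 b.1) φ n p) (g : D' ↪r D) (e : G' ↪r G)
    (hpiece : ∀ w ∈ subdivPiece φ p (Set.range g), w.1 ∈ Set.range e) :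
    ContainsInducedSubdivision D' G' :=
  (H.restrict g).containsInducedSubdivision_of_range_subset
    ((Subrel.relEmbedding _ _).trans (Subrel.relEmbedding G (· ∈ X)))
    e (by rintro _ ⟨w, rfl⟩; exact hpiece w.1 w.2)

theorem containsInducedSubdivision_of_isEmpty [IsEmpty U] (D : U → U → Prop)
    (G : V → V → Prop) : ContainsInducedSubdivision D G :=
  ⟨∅, isEmptyElim, fun u => isEmptyElim u, fun u => isEmptyElim u, isEmptyElim,
    fun u => isEmptyElim u, fun u => isEmptyElim u, fun u => isEmptyElim u,
    fun u => isEmptyElim u, fun u => isEmptyElim u, fun w => w.2.elim, fun a => a.2.elim⟩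

end Host

section ConcatPath

variable {W : Type*} {m : ℕ} {len : Fin m → ℕ}

theorem Fin.sum_castLE_succ_eq (j : Fin m) (h : (j : ℕ) + 1 ≤ m) :
    ∑ i : Fin (j + 1), len (Fin.castLE h i) =
      ∑ i : Fin j, len (Fin.castLE j.2.le i) + len j := by
  rw [Fin.sum_univ_castSucc]
  simp only [Fin.castLE_castSucc]
  rfl

theorem eq_castSucc_finSigmaFinEquiv_or_eq_last (t : Fin (∑ j, len j + 1)) :
    (∃ x, t = (finSigmaFinEquiv x).castSucc) ∨ t = Fin.last _ := by
  by_cases ht : t = Fin.last _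
  · exact .inr ht
  · obtain ⟨t, rfl⟩ := Fin.exists_castSucc_eq.2 ht
    exact .inl ⟨finSigmaFinEquiv.symm t, by simp⟩

theorem val_finSigmaFinEquiv_of_val_eq_zero {j : Fin m} (o : Fin (len j)) (hj : (j : ℕ) = 0) :
    (finSigmaFinEquiv ⟨j, o⟩ : ℕ) = o := by
  obtain ⟨j, hj'⟩ := j
  subst hj
  simp

/-- Position `finSigmaFinEquiv ⟨j, o⟩` of the concatenation is position `o` of the path `s j`;
the paths `s j` are meant to run from `b j.castSucc` to `b j.succ`. -/
def concatPath (s : ∀ j, Fin (len j + 1) → W) (b : Fin (m + 1) → W) :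
    Fin (∑ j, len j + 1) → W :=
  Fin.lastCases (b (Fin.last m))
    fun t => s (finSigmaFinEquiv.symm t).1 (finSigmaFinEquiv.symm t).2.castSucc

variable {s : ∀ j, Fin (len j + 1) → W} {b : Fin (m + 1) → W}

theorem concatPath_castSucc (x : (j : Fin m) × Fin (len j)) :
    concatPath s b (finSigmaFinEquiv x).castSucc = s x.1 x.2.castSucc := by
  rw [concatPath, Fin.lastCases_castSucc, Equiv.symm_apply_apply]

theorem concatPath_last : concatPath s b (Fin.last _) = b (Fin.last m) := by
  simp [concatPath]

theorem concatPath_zero (hlen : ∀ j, 0 < len j) (hs₀ : ∀ j, s j 0 = b j.castSucc)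
    (hm : 0 < m) : concatPath s b 0 = b 0 := by
  have : (0 : Fin (∑ j, len j + 1)) =
      (finSigmaFinEquiv ⟨⟨0, hm⟩, ⟨0, hlen _⟩⟩).castSucc :=
    Fin.ext (by simp)
  rw [this, concatPath_castSucc]
  exact (congrArg (s _) (Fin.ext (by simp))).trans
    ((hs₀ _).trans (congrArg b (Fin.ext (by simp))))

theorem concatPath_succ (hlen : ∀ j, 0 < len j) (hs₀ : ∀ j, s j 0 = b j.castSucc)
    (hs₁ : ∀ j, s j (Fin.last _) = b j.succ) (x : (j : Fin m) × Fin (len j)) :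
    concatPath s b (finSigmaFinEquiv x).succ = s x.1 x.2.succ := by
  obtain ⟨j, o⟩ := x
  by_cases ho : (o : ℕ) + 1 < len j
  · have : (finSigmaFinEquiv ⟨j, o⟩).succ =
        (finSigmaFinEquiv ⟨j, ⟨o + 1, ho⟩⟩).castSucc :=
      Fin.ext (by simp [add_assoc])
    rw [this, concatPath_castSucc]
    rfl
  have ho : o.succ = Fin.last _ := Fin.ext (by simp; omega)
  rw [ho, hs₁]
  by_cases hj : (j : ℕ) + 1 < m
  · have : (finSigmaFinEquiv ⟨j, o⟩).succ =
        (finSigmaFinEquiv ⟨⟨j + 1, hj⟩, ⟨0, hlen _⟩⟩).castSucc := by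
      ext
      simp only [Fin.val_succ, finSigmaFinEquiv_apply, Fin.val_castSucc]
      rw [Fin.sum_castLE_succ_eq j]
      omega
    rw [this, concatPath_castSucc]
    exact (congrArg (s _) (Fin.ext (by simp))).trans
      ((hs₀ _).trans (congrArg b (Fin.ext (by simp))))
  · have hsum (k : ℕ) (hk : k = m) (h : k ≤ m) :
        ∑ i : Fin k, len (Fin.castLE h i) = ∑ i, len i := by
      subst hk
      rfl
    have : (finSigmaFinEquiv ⟨j, o⟩).succ = Fin.last _ := by
      ext
      simp only [Fin.val_succ, finSigmaFinEquiv_apply, Fin.val_last]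
      rw [← hsum _ (by omega : (j : ℕ) + 1 = m) (by omega), Fin.sum_castLE_succ_eq j]
      omega
    rw [this, concatPath_last]
    exact congrArg b (Fin.ext (by simp; omega))

theorem exists_concatPath_eq (hlen : ∀ j, 0 < len j) (hs₀ : ∀ j, s j 0 = b j.castSucc)
    (hs₁ : ∀ j, s j (Fin.last _) = b j.succ) (j : Fin m) (i : Fin (len j + 1)) :
    ∃ t, concatPath s b t = s j i := by
  by_cases hi : i = Fin.last _
  · refine ⟨(finSigmaFinEquiv ⟨j, ⟨len j - 1, Nat.sub_lt (hlen j) one_pos⟩⟩).succ, ?_⟩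
    rw [concatPath_succ hlen hs₀ hs₁, hi]
    exact congrArg (s j) (Fin.ext (by simp; have := hlen j; omega))
  · obtain ⟨i, rfl⟩ := Fin.exists_castSucc_eq.2 hi
    exact ⟨_, concatPath_castSucc ⟨j, i⟩⟩

theorem exists_concatPath_eq_branch (hlen : ∀ j, 0 < len j) (hs₀ : ∀ j, s j 0 = b j.castSucc)
    (hs₁ : ∀ j, s j (Fin.last _) = b j.succ) (j : Fin (m + 1)) :
    ∃ t, concatPath s b t = b j := by
  by_cases hj : j = Fin.last _
  · exact ⟨_, hj ▸ concatPath_last⟩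
  · obtain ⟨j, rfl⟩ := Fin.exists_castSucc_eq.2 hj
    rw [← hs₀]
    exact exists_concatPath_eq hlen hs₀ hs₁ j 0

end ConcatPath

namespace IsSubdivisionVia

variable {U V W : Type*} {D : U → U → Prop} {S : V → V → Prop} {T : W → W → Prop}
  {ψ : U → V} {m : ∀ u v, D u v → ℕ} {q : ∀ u v (h : D u v), Fin (m u v h + 1) → V}
  {φ : V → W} {n : ∀ a b, S a b → ℕ} {p : ∀ a b (h : S a b), Fin (n a b h + 1) → W}
  {u v : U} {h : D u v}

/-- The composite subdivision replaces `u → v` by the concatenation of the segments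
`p _ _ (Hq.adj_path h j)`, the paths replacing the arcs of `S` along `q u v h`. -/
def composePath (Hq : IsSubdivisionVia D S ψ m q) (φ : V → W)
    (p : ∀ a b (h : S a b), Fin (n a b h + 1) → W) (u v : U) (h : D u v) :
    Fin (∑ j, n _ _ (Hq.adj_path h j) + 1) → W :=
  concatPath (fun j => p _ _ (Hq.adj_path h j)) (fun j => φ (q u v h j))

theorem composePath_castSucc (Hq : IsSubdivisionVia D S ψ m q)
    (x : (j : Fin (m u v h)) × Fin (n _ _ (Hq.adj_path h j))) :
    Hq.composePath φ p u v h (finSigmaFinEquiv x).castSucc =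
      p _ _ (Hq.adj_path h x.1) x.2.castSucc :=
  concatPath_castSucc x

theorem composePath_succ (Hq : IsSubdivisionVia D S ψ m q) (Hp : IsSubdivisionVia S T φ n p)
    (x : (j : Fin (m u v h)) × Fin (n _ _ (Hq.adj_path h j))) :
    Hq.composePath φ p u v h (finSigmaFinEquiv x).succ = p _ _ (Hq.adj_path h x.1) x.2.succ :=
  concatPath_succ (s := fun j => p _ _ (Hq.adj_path h j)) (b := fun j => φ (q u v h j))
    (fun _ => Hp.one_le _) (fun _ => Hp.path_zero _) (fun _ => Hp.path_last _) x

theorem composePath_zero (Hq : IsSubdivisionVia D S ψ m q) (Hp : IsSubdivisionVia S T φ n p) :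
    Hq.composePath φ p u v h 0 = φ (ψ u) := by
  rw [composePath, concatPath_zero (s := fun j => p _ _ (Hq.adj_path h j))
    (b := fun j => φ (q u v h j)) (fun _ => Hp.one_le _) (fun _ => Hp.path_zero _) (Hq.one_le h),
    Hq.path_zero]

theorem composePath_last (Hq : IsSubdivisionVia D S ψ m q) :
    Hq.composePath φ p u v h (Fin.last _) = φ (ψ v) := by
  rw [composePath, concatPath_last, Hq.path_last]

theorem exists_composePath_eq (Hq : IsSubdivisionVia D S ψ m q) (Hp : IsSubdivisionVia S T φ n p)
    (j : Fin (m u v h)) (i : Fin (n _ _ (Hq.adj_path h j) + 1)) :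
    ∃ t, Hq.composePath φ p u v h t = p _ _ (Hq.adj_path h j) i :=
  exists_concatPath_eq (s := fun j => p _ _ (Hq.adj_path h j)) (b := fun j => φ (q u v h j))
    (fun _ => Hp.one_le _) (fun _ => Hp.path_zero _) (fun _ => Hp.path_last _) j i

theorem exists_composePath_eq_branch (Hq : IsSubdivisionVia D S ψ m q)
    (Hp : IsSubdivisionVia S T φ n p) (j : Fin (m u v h + 1)) :
    ∃ t, Hq.composePath φ p u v h t = φ (q u v h j) :=
  exists_concatPath_eq_branch (s := fun j => p _ _ (Hq.adj_path h j))
    (b := fun j => φ (q u v h j)) (fun _ => Hp.one_le _) (fun _ => Hp.path_zero _)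
    (fun _ => Hp.path_last _) j

theorem one_le_sum_length (Hq : IsSubdivisionVia D S ψ m q) (Hp : IsSubdivisionVia S T φ n p) :
    1 ≤ ∑ j, n _ _ (Hq.adj_path h j) :=
  (Hp.one_le _).trans (Finset.single_le_sum (f := fun j => n _ _ (Hq.adj_path h j))
    (fun _ _ => Nat.zero_le _) (Finset.mem_univ ⟨0, Hq.one_le h⟩))

theorem eq_of_segment_eq (Hq : IsSubdivisionVia D S ψ m q) (Hp : IsSubdivisionVia S T φ n p)
    {u' v' : U} {h' : D u' v'} {j : Fin (m u v h)} {j' : Fin (m u' v' h')}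
    {o : Fin (n _ _ (Hq.adj_path h j))} {o' : Fin (n _ _ (Hq.adj_path h' j'))}
    (e : p _ _ (Hq.adj_path h j) o.castSucc = p _ _ (Hq.adj_path h' j') o'.castSucc) :
    (u = u' ∧ v = v' ∧ (j : ℕ) = j' ∧ (o : ℕ) = o') ∨
      ((o : ℕ) = 0 ∧ (o' : ℕ) = 0 ∧ q u v h j.castSucc = q u' v' h' j'.castSucc) := by
  rcases Hp.eq_or_exists_branch_of_path_eq e with ⟨e₁, e₂, ho⟩ | ⟨z, hz⟩
  · obtain ⟨rfl, rfl, hj⟩ := Hq.eq_of_path_arc_eq e₁ e₂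
    exact .inl ⟨rfl, rfl, hj, by simpa using ho⟩
  obtain ⟨h0, rfl⟩ := (Hp.eq_branch_of_path_eq hz).resolve_right
    fun hl => Fin.castSucc_ne_last _ hl.1
  obtain ⟨h0', hz'⟩ := (Hp.eq_branch_of_path_eq (e ▸ hz)).resolve_right
    fun hl => Fin.castSucc_ne_last _ hl.1
  exact .inr ⟨by simpa using congrArg Fin.val h0, by simpa using congrArg Fin.val h0', hz'⟩

theorem segment_castSucc_ne_end (Hq : IsSubdivisionVia D S ψ m q)
    (Hp : IsSubdivisionVia S T φ n p)
    (j : Fin (m u v h)) (o : Fin (n _ _ (Hq.adj_path h j))) :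
    p _ _ (Hq.adj_path h j) o.castSucc ≠ φ (ψ v) := by
  intro e
  obtain ⟨-, hz⟩ := (Hp.eq_branch_of_path_eq e).resolve_right
    fun hl => Fin.castSucc_ne_last _ hl.1
  exact Fin.castSucc_ne_last _ (Hq.path_injective h (hz.symm.trans (Hq.path_last h).symm))

theorem composePath_injective (Hq : IsSubdivisionVia D S ψ m q)
    (Hp : IsSubdivisionVia S T φ n p) : Function.Injective (Hq.composePath φ p u v h) := by
  intro t t' e
  rcases eq_castSucc_finSigmaFinEquiv_or_eq_last t with ⟨⟨j, o⟩, rfl⟩ | rfl <;>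
    rcases eq_castSucc_finSigmaFinEquiv_or_eq_last t' with ⟨⟨j', o'⟩, rfl⟩ | rfl
  · rw [composePath_castSucc, composePath_castSucc] at e
    obtain ⟨rfl, ho⟩ : j = j' ∧ (o : ℕ) = o' := by
      rcases Hq.eq_of_segment_eq Hp e with ⟨-, -, hj, ho⟩ | ⟨ho, ho', hq⟩
      · exact ⟨Fin.ext hj, ho⟩
      · exact ⟨Fin.castSucc_injective _ (Hq.path_injective h hq), ho.trans ho'.symm⟩
    rw [Fin.ext ho]
  · rw [composePath_castSucc, composePath_last] at e
    exact (Hq.segment_castSucc_ne_end Hp j o e).elim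
  · rw [composePath_castSucc, composePath_last] at e
    exact (Hq.segment_castSucc_ne_end Hp j' o' e.symm).elim
  · rfl

theorem composePath_ne_branch (Hq : IsSubdivisionVia D S ψ m q) (Hp : IsSubdivisionVia S T φ n p)
    {t : Fin (∑ j, n _ _ (Hq.adj_path h j) + 1)} (h0 : 0 < (t : ℕ))
    (hl : (t : ℕ) < ∑ j, n _ _ (Hq.adj_path h j)) (z : U) :
    Hq.composePath φ p u v h t ≠ φ (ψ z) := by
  intro e
  obtain ⟨⟨j, o⟩, rfl⟩ := (eq_castSucc_finSigmaFinEquiv_or_eq_last t).resolve_right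
    (by rintro rfl; simp at hl)
  rw [composePath_castSucc] at e
  obtain ⟨ho, hz⟩ := (Hp.eq_branch_of_path_eq e).resolve_right
    fun hl => Fin.castSucc_ne_last _ hl.1
  obtain ⟨hj, -⟩ := (Hq.eq_branch_of_path_eq hz.symm).resolve_right
    fun hl => Fin.castSucc_ne_last _ hl.1
  rw [Fin.val_castSucc, val_finSigmaFinEquiv_of_val_eq_zero
    (len := fun j => n _ _ (Hq.adj_path h j)) o (by simpa using congrArg Fin.val hj)] at h0
  exact h0.ne' (by simpa using congrArg Fin.val ho)

theorem eq_of_composePath_eq (Hq : IsSubdivisionVia D S ψ m q) (Hp : IsSubdivisionVia S T φ n p)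
    {u' v' : U} {h' : D u' v'} {t : Fin (∑ j, n _ _ (Hq.adj_path h j) + 1)}
    {t' : Fin (∑ j, n _ _ (Hq.adj_path h' j) + 1)} (h0 : 0 < (t : ℕ))
    (hl : (t : ℕ) < ∑ j, n _ _ (Hq.adj_path h j)) (h0' : 0 < (t' : ℕ))
    (hl' : (t' : ℕ) < ∑ j, n _ _ (Hq.adj_path h' j))
    (e : Hq.composePath φ p u v h t = Hq.composePath φ p u' v' h' t') :
    u = u' ∧ v = v' ∧ (t : ℕ) = t' := by
  obtain ⟨⟨j, o⟩, rfl⟩ := (eq_castSucc_finSigmaFinEquiv_or_eq_last t).resolve_right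
    (by rintro rfl; simp at hl)
  obtain ⟨⟨j', o'⟩, rfl⟩ := (eq_castSucc_finSigmaFinEquiv_or_eq_last t').resolve_right
    (by rintro rfl; simp at hl')
  rw [composePath_castSucc, composePath_castSucc] at e
  obtain ⟨rfl, rfl, hj, ho⟩ : u = u' ∧ v = v' ∧ (j : ℕ) = j' ∧ (o : ℕ) = o' := by
    rcases Hq.eq_of_segment_eq Hp e with hjo | ⟨ho, ho', hq⟩
    · exact hjo
    -- both segments start at the same vertex of `S`, which is interior to both `q`-paths
    have hj : (j : ℕ) ≠ 0 := fun hj => by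
      rw [Fin.val_castSucc, val_finSigmaFinEquiv_of_val_eq_zero
        (len := fun j => n _ _ (Hq.adj_path h j)) o hj] at h0
      exact h0.ne' ho
    have hj' : (j' : ℕ) ≠ 0 := fun hj => by
      rw [Fin.val_castSucc, val_finSigmaFinEquiv_of_val_eq_zero
        (len := fun j => n _ _ (Hq.adj_path h' j)) o' hj] at h0'
      exact h0'.ne' ho'
    obtain ⟨hu, hv, hjj⟩ := Hq.eq_of_path_eq (by simpa [Nat.pos_iff_ne_zero] using hj)
      (by simp) (by simpa [Nat.pos_iff_ne_zero] using hj') (by simp) hq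
    exact ⟨hu, hv, by simpa using hjj, ho.trans ho'.symm⟩
  obtain rfl : j = j' := Fin.ext hj
  obtain rfl : o = o' := Fin.ext ho
  exact ⟨rfl, rfl, rfl⟩

end IsSubdivisionVia

theorem IsSubdivision.trans {U V W : Type*} {D : U → U → Prop} {S : V → V → Prop}
    {T : W → W → Prop} (H₁ : IsSubdivision D S) (H₂ : IsSubdivision S T) :
    IsSubdivision D T := by
  obtain ⟨ψ, m, q, Hq⟩ := H₁
  obtain ⟨φ, n, p, Hp⟩ := H₂
  refine ⟨fun u => φ (ψ u), fun u v h => ∑ j, n _ _ (Hq.adj_path h j), Hq.composePath φ p,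
    Hp.injective.comp Hq.injective, fun u v h => Hq.one_le_sum_length Hp,
    fun u v h => ⟨Hq.composePath_zero Hp, Hq.composePath_last⟩,
    fun u v h => Hq.composePath_injective Hp,
    fun u v h t h0 hl z => Hq.composePath_ne_branch Hp h0 hl z,
    fun u v h u' v' h' t t' h0 hl h0' hl' => Hq.eq_of_composePath_eq Hp h0 hl h0' hl',
    fun w => ?_, fun x y => ⟨fun hxy => ?_, ?_⟩⟩
  · rcases Hp.cover w with ⟨z, rfl⟩ | ⟨a, b, hab, i, rfl⟩
    · rcases Hq.cover z with ⟨u, rfl⟩ | ⟨u, v, h, j, rfl⟩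
      · exact .inl ⟨u, rfl⟩
      · exact .inr ⟨u, v, h, Hq.exists_composePath_eq_branch Hp j⟩
    · obtain ⟨u, v, h, j, rfl, rfl⟩ := (Hq.adj_iff a b).1 hab
      exact .inr ⟨u, v, h, Hq.exists_composePath_eq Hp j i⟩
  · obtain ⟨a, b, hab, i, rfl, rfl⟩ := (Hp.adj_iff x y).1 hxy
    obtain ⟨u, v, h, j, rfl, rfl⟩ := (Hq.adj_iff a b).1 hab
    exact ⟨u, v, h, finSigmaFinEquiv ⟨j, i⟩, Hq.composePath_castSucc _,
      Hq.composePath_succ Hp _⟩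
  · rintro ⟨u, v, h, t, rfl, rfl⟩
    obtain ⟨x, rfl⟩ := finSigmaFinEquiv.surjective t
    rw [Hq.composePath_castSucc, Hq.composePath_succ Hp]
    exact Hp.adj_path _ _

theorem ContainsInducedSubdivision.trans {U V W : Type*} {P : U → U → Prop}
    {Q : V → V → Prop} {G : W → W → Prop} (hPQ : ContainsInducedSubdivision P Q)
    (hQG : ContainsInducedSubdivision Q G) : ContainsInducedSubdivision P G := by
  obtain ⟨Y, HY⟩ := hPQ
  obtain ⟨X, φ, n, p, HX⟩ := hQG
  exact (HY.trans (HX.restrict (Subrel.relEmbedding Q (· ∈ Y)))).containsInducedSubdivision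
    ((Subrel.relEmbedding _ _).trans (Subrel.relEmbedding G (· ∈ X)))

section DisjointUnion

variable {U₁ U₂ W₁ W₂ : Type*} {D₁ : U₁ → U₁ → Prop} {D₂ : U₂ → U₂ → Prop}

theorem IsSubdivision.refl {U : Type*} {D : U → U → Prop} (hD : ∀ u, ¬ D u u) :
    IsSubdivision D D := by
  refine ⟨id, fun _ _ _ => 1, fun u v _ => ![u, v], Function.injective_id, fun _ _ _ => le_rfl,
    fun _ _ _ => ⟨rfl, rfl⟩, fun u v h => ?_, fun _ _ _ i h0 hl => by dsimp only at hl; omega,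
    fun _ _ _ _ _ _ i _ h0 hl => by dsimp only at hl; omega, fun w => .inl ⟨w, rfl⟩,
    fun a b => ⟨fun h => ?_, ?_⟩⟩
  · have : u ≠ v := fun e => hD u (e ▸ h)
    intro i j
    fin_cases i <;> fin_cases j <;> simp [this, this.symm]
  · exact ⟨a, b, h, 0, rfl, rfl⟩
  · rintro ⟨u, v, h, i, rfl, rfl⟩
    fin_cases i
    exact h

variable {S₁ : W₁ → W₁ → Prop} {S₂ : W₂ → W₂ → Prop}

def sumLength (n₁ : ∀ u v, D₁ u v → ℕ) (n₂ : ∀ u v, D₂ u v → ℕ) :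
    ∀ u v, Sum.LiftRel D₁ D₂ u v → ℕ
  | .inl a, .inl a', h => n₁ a a' (Sum.liftRel_inl_inl.1 h)
  | .inr b, .inr b', h => n₂ b b' (Sum.liftRel_inr_inr.1 h)
  | .inl _, .inr _, h => (Sum.not_liftRel_inl_inr h).elim
  | .inr _, .inl _, h => (Sum.not_liftRel_inr_inl h).elim

def sumPath {n₁ : ∀ u v, D₁ u v → ℕ} {n₂ : ∀ u v, D₂ u v → ℕ}
    (p₁ : ∀ u v (h : D₁ u v), Fin (n₁ u v h + 1) → W₁)
    (p₂ : ∀ u v (h : D₂ u v), Fin (n₂ u v h + 1) → W₂) :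
    ∀ u v (h : Sum.LiftRel D₁ D₂ u v), Fin (sumLength n₁ n₂ u v h + 1) → W₁ ⊕ W₂
  | .inl a, .inl a', h => fun i => .inl (p₁ a a' (Sum.liftRel_inl_inl.1 h) i)
  | .inr b, .inr b', h => fun i => .inr (p₂ b b' (Sum.liftRel_inr_inr.1 h) i)
  | .inl _, .inr _, h => (Sum.not_liftRel_inl_inr h).elim
  | .inr _, .inl _, h => (Sum.not_liftRel_inr_inl h).elim

theorem IsSubdivision.sumLiftRel (H₁ : IsSubdivision D₁ S₁) (H₂ : IsSubdivision D₂ S₂) :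
    IsSubdivision (Sum.LiftRel D₁ D₂) (Sum.LiftRel S₁ S₂) := by
  obtain ⟨φ₁, n₁, p₁, H₁⟩ := H₁
  obtain ⟨φ₂, n₂, p₂, H₂⟩ := H₂
  refine ⟨Sum.map φ₁ φ₂, sumLength n₁ n₂, sumPath p₁ p₂,
    Sum.map_injective.2 ⟨H₁.injective, H₂.injective⟩, ?_, ?_, ?_, ?_, ?_, ?_, ?_⟩
  · rintro _ _ (h | h)
    exacts [H₁.one_le h, H₂.one_le h]
  · rintro _ _ (h | h)
    exacts [⟨congrArg _ (H₁.path_zero h), congrArg _ (H₁.path_last h)⟩,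
      ⟨congrArg _ (H₂.path_zero h), congrArg _ (H₂.path_last h)⟩]
  · rintro _ _ (h | h)
    exacts [Sum.inl_injective.comp (H₁.path_injective h),
      Sum.inr_injective.comp (H₂.path_injective h)]
  · rintro _ _ (h | h) i h0 hl (z | z) e
    · exact H₁.path_ne_branch h h0 hl z (Sum.inl_injective e)
    · exact Sum.inl_ne_inr e
    · exact Sum.inr_ne_inl e
    · exact H₂.path_ne_branch h h0 hl z (Sum.inr_injective e)
  · rintro _ _ (h | h) _ _ (h' | h') i i' h0 hl h0' hl' e
    · simpa using H₁.eq_of_path_eq h0 hl h0' hl' (Sum.inl_injective e)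
    · exact (Sum.inl_ne_inr e).elim
    · exact (Sum.inr_ne_inl e).elim
    · simpa using H₂.eq_of_path_eq h0 hl h0' hl' (Sum.inr_injective e)
  · rintro (w | w)
    · rcases H₁.cover w with ⟨u, rfl⟩ | ⟨u, v, h, i, rfl⟩
      exacts [.inl ⟨.inl u, rfl⟩, .inr ⟨.inl u, .inl v, .inl h, i, rfl⟩]
    · rcases H₂.cover w with ⟨u, rfl⟩ | ⟨u, v, h, i, rfl⟩
      exacts [.inl ⟨.inr u, rfl⟩, .inr ⟨.inr u, .inr v, .inr h, i, rfl⟩]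
  · intro x y
    constructor
    · rintro (hxy | hxy)
      · obtain ⟨u, v, h, i, rfl, rfl⟩ := (H₁.adj_iff _ _).1 hxy
        exact ⟨.inl u, .inl v, .inl h, i, rfl, rfl⟩
      · obtain ⟨u, v, h, i, rfl, rfl⟩ := (H₂.adj_iff _ _).1 hxy
        exact ⟨.inr u, .inr v, .inr h, i, rfl, rfl⟩
    · rintro ⟨_, _, h | h, i, rfl, rfl⟩
      exacts [.inl (H₁.adj_path h i), .inr (H₂.adj_path h i)]

end DisjointUnion

open Finset in
/-- Read `comp u` as the component of `u`, `none` being the distinguished one, and `side u` as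
the component receiving `u`, `none` being the outside. `P` holds for components sent outside
and propagates back from receiving components; since no component receives more vertices than
it has, it reaches the distinguished component. -/
theorem Option.prop_none_of_card_le {U κ : Type*} [Fintype U] [Fintype κ] [DecidableEq κ]
    (comp side : U → Option κ)
    (hcard : ∀ j, #{u | side u = some j} ≤ #{u | comp u = some j})
    {u₀ : U} (hu₀ : comp u₀ = none) {P : Option κ → Prop}
    (hnone : ∀ u, side u = none → P (comp u))
    (hsome : ∀ u j, side u = some j → P (some j) → P (comp u)) : P none := by
  classical
  by_contra hP
  set N : Finset U := {u | ¬ P (comp u)}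
  have hN_side : ∀ j, #{u ∈ N | side u = some j} ≤ #{u ∈ N | comp u = some j} := by
    intro j
    by_cases hj : P (some j)
    · have : {u ∈ N | side u = some j} = ∅ := by
        ext u; simpa [N] using fun hu hs => hu (hsome u j hs hj)
      simp [this]
    · calc #{u ∈ N | side u = some j} ≤ #{u | side u = some j} :=
            card_le_card (filter_subset_filter _ (subset_univ N))
        _ ≤ #{u | comp u = some j} := hcard j
        _ = #{u ∈ N | comp u = some j} := by
            congr 1
            ext u
            simp only [N, mem_filter, mem_univ, true_and]
            exact ⟨fun h => ⟨h ▸ hj, h⟩, And.right⟩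
  have hN_none : #{u ∈ N | side u = none} = 0 := by
    simp only [card_eq_zero, filter_eq_empty_iff]
    exact fun u hu hs => (mem_filter.1 hu).2 (hnone u hs)
  have hpos : 0 < #{u ∈ N | comp u = none} :=
    card_pos.2 ⟨u₀, by simp [N, hu₀, hP]⟩
  have hside := card_eq_sum_card_fiberwise (f := side) (s := N) (t := univ) (by simp)
  have hcomp := card_eq_sum_card_fiberwise (f := comp) (s := N) (t := univ) (by simp)
  rw [Fintype.sum_option] at hside hcomp
  have := sum_le_sum fun j (_ : j ∈ univ) => hN_side j
  omega

section Glue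

variable {A B C : Type*} {k : ℕ} {c : B → Fin k} {D : A ⊕ B → A ⊕ B → Prop}
  {G₁ : C → C → Prop}

def blockOf {α : Type*} (c : B → Fin k) : α ⊕ B → Option (Fin k) :=
  Sum.elim (fun _ => none) fun b => some (c b)

theorem blockOf_eq_none {α : Type*} {x : α ⊕ B} (hx : blockOf c x = none) :
    x ∈ Set.range Sum.inl := by
  rcases x with a | b
  exacts [⟨a, rfl⟩, (Option.some_ne_none _ hx).elim]

theorem blockOf_eq_some {α : Type*} {x : α ⊕ B} {j : Fin k} (hx : blockOf c x = some j) :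
    ∃ b : {b // c b = j}, Sum.inr b.1 = x := by
  rcases x with a | b
  exacts [(Option.some_ne_none _ hx.symm).elim, ⟨⟨b, Option.some_injective _ hx⟩, rfl⟩]

def classDigraph (D : A ⊕ B → A ⊕ B → Prop) (c : B → Fin k) (j : Fin k) :
    {b // c b = j} → {b // c b = j} → Prop :=
  fun b b' => D (.inr b.1) (.inr b'.1)

def classDigraph.toDigraph (j : Fin k) : classDigraph D c j ↪r D :=
  ⟨⟨fun b => .inr b.1, Sum.inr_injective.comp Subtype.val_injective⟩, Iff.rfl⟩

def classDigraph.toGlue (j : Fin k) :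
    classDigraph D c j ↪r glue G₁ fun b b' => D (.inr b) (.inr b') :=
  ⟨⟨fun b => .inr b.1, Sum.inr_injective.comp Subtype.val_injective⟩, Iff.rfl⟩

theorem blockOf_eq_of_glue (hcB : ∀ x y : B, D (.inr x) (.inr y) → c x = c y) {x y : C ⊕ B}
    (hxy : glue G₁ (fun b b' => D (.inr b) (.inr b')) x y) : blockOf c x = blockOf c y := by
  rcases x with x | x <;> rcases y with y | y
  · rfl
  · exact hxy.elim
  · exact hxy.elim
  · exact congrArg some (hcB x y hxy)

namespace IsSubdivisionVia

variable {X : Set (C ⊕ B)} {φ : A ⊕ B → X} {n : ∀ u v, D u v → ℕ}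
  {p : ∀ u v (h : D u v), Fin (n u v h + 1) → X}
  (H : IsSubdivisionVia D (fun a b : X => glue G₁ (fun b b' => D (.inr b) (.inr b')) a b) φ n p)
include H

open Finset in
theorem card_block_le [Fintype A] [Fintype B] (j : Fin k) :
    #{u | blockOf c (φ u).1 = some j} ≤ #{u : A ⊕ B | blockOf c u = some j} := by
  refine card_le_card_of_injOn (fun u => Sum.elim (fun _ => u) Sum.inr (φ u).1) ?_ ?_
  · intro u hu
    obtain ⟨b, hb⟩ := blockOf_eq_some (mem_filter.1 hu).2
    simp only [coe_filter, mem_univ, true_and, Set.mem_ofPred_eq, ← hb, Sum.elim_inr]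
    exact congrArg some b.2
  · intro u hu u' hu' e
    obtain ⟨b, hb⟩ := blockOf_eq_some (mem_filter.1 hu).2
    obtain ⟨b', hb'⟩ := blockOf_eq_some (mem_filter.1 hu').2
    simp only [← hb, ← hb', Sum.elim_inr, Sum.inr.injEq] at e
    exact H.injective (Subtype.ext (by rw [← hb, ← hb', e]))

variable (hcB : ∀ x y : B, D (.inr x) (.inr y) → c x = c y)
include hcB

theorem block_eq_of_block_eq
    (hconnA : ∀ x y : A, Relation.ReflTransGen
      (fun p q : A => D (.inl p) (.inl q) ∨ D (.inl q) (.inl p)) x y)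
    (hconnB : ∀ x y : B, c x = c y → Relation.ReflTransGen
      (fun p q : B => D (.inr p) (.inr q) ∨ D (.inr q) (.inr p)) x y)
    {u u' : A ⊕ B} (hu : blockOf c u = blockOf c u') :
    blockOf c (φ u).1 = blockOf c (φ u').1 := by
  have hf (a b : X) (hab : glue G₁ (fun b b' => D (.inr b) (.inr b')) a b) :
      blockOf c a.1 = blockOf c b.1 :=
    blockOf_eq_of_glue hcB hab
  rcases u with a | b <;> rcases u' with a' | b'
  · exact H.apply_eq_of_reflTransGen hf Sum.inl (fun _ _ h => h) (hconnA a a')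
  · exact (Option.some_ne_none _ hu.symm).elim
  · exact (Option.some_ne_none _ hu).elim
  · exact H.apply_eq_of_reflTransGen hf Sum.inr (fun _ _ h => h)
      (hconnB b b' (Option.some_injective _ hu))

theorem containsInducedSubdivision_of_block_eq_none {U' : Type*} {D' : U' → U' → Prop}
    (g : D' ↪r D) (hg : ∀ a, blockOf c (φ (g a)).1 = none) :
    ContainsInducedSubdivision D' G₁ :=
  H.containsInducedSubdivision_of_subdivPiece_subset g ⟨⟨Sum.inl, Sum.inl_injective⟩, Iff.rfl⟩
    fun _ hw => by
      obtain ⟨_, ⟨a, rfl⟩, hwa⟩ :=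
        H.exists_apply_eq_of_mem_subdivPiece (fun _ _ => blockOf_eq_of_glue hcB) hw
      exact blockOf_eq_none (hwa.trans (hg a))

theorem containsInducedSubdivision_classDigraph {U' : Type*} {D' : U' → U' → Prop}
    (g : D' ↪r D) {j : Fin k} (hg : ∀ a, blockOf c (φ (g a)).1 = some j) :
    ContainsInducedSubdivision D' (classDigraph D c j) :=
  H.containsInducedSubdivision_of_subdivPiece_subset g (classDigraph.toGlue j) fun _ hw => by
    obtain ⟨_, ⟨a, rfl⟩, hwa⟩ :=
      H.exists_apply_eq_of_mem_subdivPiece (fun _ _ => blockOf_eq_of_glue hcB) hw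
    exact blockOf_eq_some (hwa.trans (hg a))

end IsSubdivisionVia

end Glue

theorem ContainsInducedSubdivision.of_glue {A B C : Type*} [Fintype A] [Fintype B] {k : ℕ}
    {c : B → Fin k} {D : A ⊕ B → A ⊕ B → Prop} {G₁ : C → C → Prop}
    (hconnA : ∀ x y : A, Relation.ReflTransGen
      (fun p q : A => D (.inl p) (.inl q) ∨ D (.inl q) (.inl p)) x y)
    (hcB : ∀ x y : B, D (.inr x) (.inr y) → c x = c y)
    (hconnB : ∀ x y : B, c x = c y → Relation.ReflTransGen
      (fun p q : B => D (.inr p) (.inr q) ∨ D (.inr q) (.inr p)) x y)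
    (h : ContainsInducedSubdivision D (glue G₁ fun b b' => D (.inr b) (.inr b'))) :
    ContainsInducedSubdivision (fun a a' : A => D (.inl a) (.inl a')) G₁ := by
  rcases isEmpty_or_nonempty A with _ | ⟨⟨a₀⟩⟩
  · exact containsInducedSubdivision_of_isEmpty _ _
  obtain ⟨X, φ, n, p, H⟩ := h
  have hA (a a' : A) : blockOf c (φ (.inl a)).1 = blockOf c (φ (.inl a')).1 :=
    H.block_eq_of_block_eq hcB hconnA hconnB rfl
  have hB (b b' : B) (hb : c b = c b') : blockOf c (φ (.inr b)).1 = blockOf c (φ (.inr b')).1 :=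
    H.block_eq_of_block_eq hcB hconnA hconnB (congrArg some hb)
  let toD : (fun a a' : A => D (.inl a) (.inl a')) ↪r D :=
    ⟨⟨Sum.inl, Sum.inl_injective⟩, Iff.rfl⟩
  refine Option.prop_none_of_card_le (blockOf c) (fun u => blockOf c (φ u).1) H.card_block_le
    (u₀ := .inl a₀) rfl (P := fun i => i.elim
      (ContainsInducedSubdivision (fun a a' : A => D (.inl a) (.inl a')) G₁)
      fun j => ContainsInducedSubdivision (classDigraph D c j) G₁) ?_ ?_
  · rintro (a | b) hu
    · exact H.containsInducedSubdivision_of_block_eq_none hcB toD fun a' => (hA a' a).trans hu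
    · exact H.containsInducedSubdivision_of_block_eq_none hcB (classDigraph.toDigraph _)
        fun b' => (hB _ b b'.2).trans hu
  · rintro (a | b) j hu hP
    · exact (H.containsInducedSubdivision_classDigraph hcB toD
        fun a' => (hA a' a).trans hu).trans hP
    · exact (H.containsInducedSubdivision_classDigraph hcB (classDigraph.toDigraph _)
        fun b' => (hB _ b b'.2).trans hu).trans hP

theorem glue_eq_liftRel {C B : Type*} (G₁ : C → C → Prop) (DB : B → B → Prop) :
    glue G₁ DB = Sum.LiftRel G₁ DB := by
  ext (x | x) (y | y) <;> simp [glue]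

theorem ContainsInducedSubdivision.glue {A B C : Type*} {D : A ⊕ B → A ⊕ B → Prop}
    {G₁ : C → C → Prop} (hloopless : ∀ p, ¬ D p p)
    (hAB : ∀ (a : A) (b : B), ¬ D (.inl a) (.inr b) ∧ ¬ D (.inr b) (.inl a))
    (h : ContainsInducedSubdivision (fun a a' : A => D (.inl a) (.inl a')) G₁) :
    ContainsInducedSubdivision D (glue G₁ fun b b' => D (.inr b) (.inr b')) := by
  obtain ⟨X, HX⟩ := h
  have hD : Sum.LiftRel (fun a a' => D (.inl a) (.inl a')) (fun b b' => D (.inr b) (.inr b'))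
      = D := by
    ext (a | b) (a' | b') <;> simp [hAB]
  have hB : IsSubdivision (fun b b' : B => D (.inr b) (.inr b')) _ :=
    IsSubdivision.refl fun b => hloopless (.inr b)
  have := (HX.sumLiftRel hB).containsInducedSubdivision
    (RelEmbedding.sumLiftRelMap (Subrel.relEmbedding G₁ (· ∈ X)) (RelEmbedding.refl _))
  rwa [hD, ← glue_eq_liftRel] at this

/-- Let `D` be a (finite, loopless) digraph on `A ⊕ B` whose connected components are
`D₁` (the restriction to `A`, which is weakly connected) and `D₂, …, D_k` (the classes of
the labelling `c` of `B`, each weakly connected, with no arcs between distinct classes and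
none between `A` and `B`).  Let `G` be obtained from `D` by replacing `D₁` by an arbitrary
digraph `G₁`.  Then `G` contains an induced subdivision of `D` if and only if `G₁` contains
an induced subdivision of `D₁`. -/
theorem stmt7 {A B C : Type} [Fintype A] [Fintype B] (k : ℕ) (c : B → Fin k)
    (D : A ⊕ B → A ⊕ B → Prop) (G₁ : C → C → Prop)
    (hloopless : ∀ p, ¬ D p p)
    (hAB : ∀ (a : A) (b : B), ¬ D (Sum.inl a) (Sum.inr b) ∧ ¬ D (Sum.inr b) (Sum.inl a))
    (hconnA : ∀ x y : A,
      Relation.ReflTransGen (fun p q : A => D (Sum.inl p) (Sum.inl q) ∨ D (Sum.inl q) (Sum.inl p)) x y)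
    (hcB : ∀ x y : B, D (Sum.inr x) (Sum.inr y) → c x = c y)
    (hconnB : ∀ x y : B, c x = c y →
      Relation.ReflTransGen (fun p q : B => D (Sum.inr p) (Sum.inr q) ∨ D (Sum.inr q) (Sum.inr p)) x y) :
    ContainsInducedSubdivision D (glue G₁ (fun x y : B => D (Sum.inr x) (Sum.inr y))) ↔
      ContainsInducedSubdivision (fun a a' : A => D (Sum.inl a) (Sum.inl a')) G₁ :=
  ⟨ContainsInducedSubdivision.of_glue hconnA hcB hconnB,
    ContainsInducedSubdivision.glue hloopless hAB⟩
end

section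
/- Let G be an oriented graph, s a vertex, and T an induced out-tree rooted at s in G (an out-tree that is an induced subdigraph of G). Suppose some vertex x of T has an out-neighbour y not in T such that y has no out-neighbour that is an ancestor of x in T, and choose x earliest (in the IBFS order) with this property and y appropriately. Then G contains an induced cherry rooted at s. -/
/-!
Take `x` earliest in the IBFS order among the vertices violating (ii), with witness `y`. Then `y`
has no arc to an ancestor of `x` and, by minimality, no arc from a proper ancestor of `x`. Since
IBFS rejected `y`, it is adjacent to some other tree vertex `j` with `par j ≤ x`; take `j`
earliest. The tree paths from `s` to `x` and to `j` form a fork splitting at their last common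
vertex, and since `par` is monotone, the minimality of `j` keeps `y` away from the part of the
branch to `j` below the fork point. As `T` is induced, the only arcs on the fork plus `y` are
the tree arcs, `x → y` and the arc between `j` and `y`. If that arc is `j → y`, the fork with
both branches continued to `y` is a cherry; if it is `y → j`, the branch to `x` continued through
`y` to `j`, together with the branch to `j`, is one.
-/

/-- The digraph `H` is a cherry rooted at `s`, on `(s, u, v)` with `u = P np`, `v = Q nq`:
it consists of an induced directed path `P` from `s` to `u` (possibly of length 0), and two
directed paths `Q` and `R` from `u` to `v`, both of length at least 1 and at least one of
length at least 2; `u` and `v` are the only vertices lying on more than one of `P, Q, R`,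
every vertex of `H` lies on one of the paths, and the arcs of `H` are exactly the path arcs. -/
def IsCherryAt {W : Type*} (H : W → W → Prop) (s : W) : Prop :=
  ∃ (np nq nr : ℕ) (P Q R : ℕ → W),
    1 ≤ nq ∧ 1 ≤ nr ∧ (2 ≤ nq ∨ 2 ≤ nr) ∧
    P 0 = s ∧ P np = Q 0 ∧ Q 0 = R 0 ∧ Q nq = R nr ∧
    (∀ i ≤ np, ∀ j ≤ np, P i = P j → i = j) ∧
    (∀ i ≤ nq, ∀ j ≤ nq, Q i = Q j → i = j) ∧
    (∀ i ≤ nr, ∀ j ≤ nr, R i = R j → i = j) ∧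
    (∀ i < np, H (P i) (P (i + 1))) ∧
    (∀ i < nq, H (Q i) (Q (i + 1))) ∧
    (∀ i < nr, H (R i) (R (i + 1))) ∧
    (∀ i ≤ nq, ∀ j ≤ nr, Q i = R j → (i = 0 ∧ j = 0) ∨ (i = nq ∧ j = nr)) ∧
    (∀ i ≤ np, ∀ j ≤ nq, P i = Q j → i = np ∧ j = 0) ∧
    (∀ i ≤ np, ∀ j ≤ nr, P i = R j → i = np ∧ j = 0) ∧
    (∀ w : W, (∃ i ≤ np, P i = w) ∨ (∃ i ≤ nq, Q i = w) ∨ (∃ i ≤ nr, R i = w)) ∧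
    (∀ a b : W, H a b ↔
      ((∃ i < np, P i = a ∧ P (i + 1) = b) ∨ (∃ i < nq, Q i = a ∧ Q (i + 1) = b) ∨
        (∃ i < nr, R i = a ∧ R (i + 1) = b)))

/-- The digraph `H` is a cherry. -/
def IsCherry {W : Type*} (H : W → W → Prop) : Prop := ∃ s, IsCherryAt H s

/-- `p 0 = 0, p 1, …, p n` descends the tree on the indices `0, …, m` in which each `k ≥ 1` has
parent `par k`. -/
structure IsRootPath (m : ℕ) (par p : ℕ → ℕ) (n : ℕ) : Prop where
  apply_zero : p 0 = 0
  one_le : ∀ r < n, 1 ≤ p (r + 1)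
  le : ∀ r ≤ n, p r ≤ m
  par_succ : ∀ r < n, par (p (r + 1)) = p r

theorem exists_isRootPath {m : ℕ} {par : ℕ → ℕ} (hpar : ∀ k, 1 ≤ k → k ≤ m → par k < k)
    {k : ℕ} (hk : k ≤ m) : ∃ n p, IsRootPath m par p n ∧ p n = k := by
  induction k using Nat.strong_induction_on with
  | _ k ih =>
    rcases Nat.eq_zero_or_pos k with rfl | hk1
    · exact ⟨0, fun _ => 0, ⟨rfl, by simp, fun _ _ => Nat.zero_le m, by simp⟩, rfl⟩
    obtain ⟨n, p, hp, hpn⟩ := ih (par k) (hpar k hk1 hk) ((hpar k hk1 hk).le.trans hk)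
    have hp' (r : ℕ) (hr : r ≤ n) : Function.update p (n + 1) k r = p r :=
      Function.update_of_ne (by omega) _ _
    refine ⟨n + 1, Function.update p (n + 1) k,
      ⟨?_, fun r hr => ?_, fun r hr => ?_, fun r hr => ?_⟩, Function.update_self ..⟩
    · rw [hp' 0 (Nat.zero_le n), hp.apply_zero]
    · rcases Nat.lt_or_ge r n with hrn | hrn
      · rw [hp' _ hrn]; exact hp.one_le r hrn
      · rw [show r + 1 = n + 1 by omega, Function.update_self]; exact hk1
    · rcases Nat.lt_or_ge r (n + 1) with hrn | hrn
      · rw [hp' _ (by omega)]; exact hp.le r (by omega)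
      · rw [show r = n + 1 by omega, Function.update_self]; exact hk
    · rw [hp' r (by omega)]
      rcases Nat.lt_or_ge r n with hrn | hrn
      · rw [hp' _ hrn]; exact hp.par_succ r hrn
      · rw [show r = n by omega, Function.update_self, hpn]

namespace IsRootPath

variable {m : ℕ} {par p q : ℕ → ℕ} {n n' : ℕ}

theorem strictMonoOn (hpar : ∀ k, 1 ≤ k → k ≤ m → par k < k) (hp : IsRootPath m par p n) :
    StrictMonoOn p (Set.Iic n) :=
  strictMonoOn_Iic_of_lt_succ fun r hr => by
    rw [Order.succ_eq_add_one, ← hp.par_succ r hr]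
    exact hpar _ (hp.one_le r hr) (hp.le _ hr)

theorem reflTransGen (hp : IsRootPath m par p n) {r : ℕ} (hr : r ≤ n) :
    Relation.ReflTransGen (fun a b : ℕ => a = par b ∧ 1 ≤ b ∧ b ≤ m) (p r) (p n) := by
  induction n, hr using Nat.le_induction with
  | base => exact .refl
  | succ n hrn ih =>
    refine .tail (ih ⟨hp.apply_zero, fun i hi => hp.one_le i (by omega),
      fun i hi => hp.le i (by omega), fun i hi => hp.par_succ i (by omega)⟩) ?_
    exact ⟨(hp.par_succ n n.lt_succ_self).symm, hp.one_le n n.lt_succ_self, hp.le _ le_rfl⟩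

theorem eq_of_apply_eq (hp : IsRootPath m par p n) (hq : IsRootPath m par q n') :
    ∀ {r r' : ℕ}, r ≤ n → r' ≤ n' → p r = q r' → r = r' ∧ ∀ i ≤ r, p i = q i
  | 0, 0, _, _, _ => ⟨rfl, fun i hi => by rw [Nat.le_zero.mp hi, hp.apply_zero, hq.apply_zero]⟩
  | 0, r' + 1, _, hr', h => absurd (hq.one_le r' hr') (by rw [← h, hp.apply_zero]; omega)
  | r + 1, 0, hr, _, h => absurd (hp.one_le r hr) (by rw [h, hq.apply_zero]; omega)
  | r + 1, r' + 1, hr, hr', h => by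
    have hpar : p r = q r' := by rw [← hp.par_succ r hr, ← hq.par_succ r' hr', h]
    obtain ⟨rfl, hagree⟩ := eq_of_apply_eq hp hq (r := r) (r' := r') (by omega) (by omega) hpar
    refine ⟨rfl, fun i hi => ?_⟩
    rcases Nat.lt_or_ge i (r + 1) with hi' | hi'
    · exact hagree i (by omega)
    · rwa [show i = r + 1 by omega]

theorem exists_lca (hp : IsRootPath m par p n) (hq : IsRootPath m par q n') :
    ∃ c ≤ n, c ≤ n' ∧ (∀ r ≤ c, p r = q r) ∧
      ∀ r ≤ n, ∀ r' ≤ n', p r = q r' → r = r' ∧ r ≤ c := by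
  set c := Nat.findGreatest (fun r => p r = q r) (min n n')
  have hc : c ≤ min n n' := Nat.findGreatest_le _
  have hpc : p c = q c :=
    Nat.findGreatest_spec (P := fun r => p r = q r) (Nat.zero_le _)
      (by rw [hp.apply_zero, hq.apply_zero])
  refine ⟨c, by omega, by omega, (eq_of_apply_eq hp hq (by omega) (by omega) hpc).2,
    fun r hr r' hr' h => ?_⟩
  obtain ⟨rfl, -⟩ := eq_of_apply_eq hp hq hr hr' h
  exact ⟨rfl, Nat.le_findGreatest (by omega) h⟩

end IsRootPath

section Cherry

variable {V : Type*} {G : V → V → Prop}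

theorem exists_restrict_Iic {X : Set V} {f : ℕ → V} {n : ℕ} (hf : f '' Set.Iic n ⊆ X) :
    ∃ g : ℕ → X, ∀ i ≤ n, (g i : V) = f i :=
  ⟨fun i => ⟨f (min i n), hf ⟨_, Set.mem_Iic.2 (min_le_right i n), rfl⟩⟩,
    fun i hi => by simp only [min_eq_left hi]⟩

theorem exists_isCherryAt_of_paths {s : V} {np nq nr : ℕ} {P Q R : ℕ → V}
    (hnq : 1 ≤ nq) (hnr : 1 ≤ nr) (hlong : 2 ≤ nq ∨ 2 ≤ nr)
    (hP0 : P 0 = s) (hPQ : P np = Q 0) (hQR : Q 0 = R 0) (hQR' : Q nq = R nr)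
    (hPinj : ∀ i ≤ np, ∀ j ≤ np, P i = P j → i = j)
    (hQinj : ∀ i ≤ nq, ∀ j ≤ nq, Q i = Q j → i = j)
    (hRinj : ∀ i ≤ nr, ∀ j ≤ nr, R i = R j → i = j)
    (hParc : ∀ i < np, G (P i) (P (i + 1)))
    (hQarc : ∀ i < nq, G (Q i) (Q (i + 1)))
    (hRarc : ∀ i < nr, G (R i) (R (i + 1)))
    (hQR_eq : ∀ i ≤ nq, ∀ j ≤ nr, Q i = R j → (i = 0 ∧ j = 0) ∨ (i = nq ∧ j = nr))
    (hPQ_eq : ∀ i ≤ np, ∀ j ≤ nq, P i = Q j → i = np ∧ j = 0)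
    (hPR_eq : ∀ i ≤ np, ∀ j ≤ nr, P i = R j → i = np ∧ j = 0)
    (hinduced : ∀ a ∈ P '' Set.Iic np ∪ Q '' Set.Iic nq ∪ R '' Set.Iic nr,
      ∀ b ∈ P '' Set.Iic np ∪ Q '' Set.Iic nq ∪ R '' Set.Iic nr, G a b →
      (∃ i < np, P i = a ∧ P (i + 1) = b) ∨ (∃ i < nq, Q i = a ∧ Q (i + 1) = b) ∨
        (∃ i < nr, R i = a ∧ R (i + 1) = b)) :
    ∃ (X : Set V) (hs : s ∈ X), IsCherryAt (fun a b : X => G a.1 b.1) ⟨s, hs⟩ := by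
  set X := P '' Set.Iic np ∪ Q '' Set.Iic nq ∪ R '' Set.Iic nr
  have hs : s ∈ X := Or.inl (Or.inl ⟨0, Nat.zero_le np, hP0⟩)
  obtain ⟨P', hP'⟩ := exists_restrict_Iic (Set.subset_union_left.trans Set.subset_union_left :
    P '' Set.Iic np ⊆ X)
  obtain ⟨Q', hQ'⟩ := exists_restrict_Iic (Set.subset_union_right.trans Set.subset_union_left :
    Q '' Set.Iic nq ⊆ X)
  obtain ⟨R', hR'⟩ := exists_restrict_Iic (Set.subset_union_right : R '' Set.Iic nr ⊆ X)
  refine ⟨X, hs, np, nq, nr, P', Q', R', hnq, hnr, hlong, ?_, ?_, ?_, ?_, ?_, ?_, ?_, ?_, ?_, ?_,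
    ?_, ?_, ?_, ?_, ?_⟩
  · exact Subtype.ext ((hP' _ (Nat.zero_le _)).trans hP0)
  · exact Subtype.ext ((hP' _ le_rfl).trans (hPQ.trans (hQ' _ (Nat.zero_le _)).symm))
  · exact Subtype.ext ((hQ' _ (Nat.zero_le _)).trans (hQR.trans (hR' _ (Nat.zero_le _)).symm))
  · exact Subtype.ext ((hQ' _ le_rfl).trans (hQR'.trans (hR' _ le_rfl).symm))
  · intro i hi j hj h
    exact hPinj i hi j hj (by simpa only [hP' _ hi, hP' _ hj] using congrArg Subtype.val h)
  · intro i hi j hj h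
    exact hQinj i hi j hj (by simpa only [hQ' _ hi, hQ' _ hj] using congrArg Subtype.val h)
  · intro i hi j hj h
    exact hRinj i hi j hj (by simpa only [hR' _ hi, hR' _ hj] using congrArg Subtype.val h)
  · intro i hi
    simpa only [hP' _ hi.le, hP' _ (Nat.succ_le_of_lt hi)] using hParc i hi
  · intro i hi
    simpa only [hQ' _ hi.le, hQ' _ (Nat.succ_le_of_lt hi)] using hQarc i hi
  · intro i hi
    simpa only [hR' _ hi.le, hR' _ (Nat.succ_le_of_lt hi)] using hRarc i hi
  · intro i hi j hj h
    exact hQR_eq i hi j hj (by simpa only [hQ' _ hi, hR' _ hj] using congrArg Subtype.val h)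
  · intro i hi j hj h
    exact hPQ_eq i hi j hj (by simpa only [hP' _ hi, hQ' _ hj] using congrArg Subtype.val h)
  · intro i hi j hj h
    exact hPR_eq i hi j hj (by simpa only [hP' _ hi, hR' _ hj] using congrArg Subtype.val h)
  · rintro ⟨w, (⟨i, hi, rfl⟩ | ⟨i, hi, rfl⟩) | ⟨i, hi, rfl⟩⟩
    · exact Or.inl ⟨i, hi, Subtype.ext (hP' _ hi)⟩
    · exact Or.inr (Or.inl ⟨i, hi, Subtype.ext (hQ' _ hi)⟩)
    · exact Or.inr (Or.inr ⟨i, hi, Subtype.ext (hR' _ hi)⟩)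
  · rintro ⟨a, ha⟩ ⟨b, hb⟩
    simp only [Subtype.ext_iff]
    constructor
    · intro hab
      rcases hinduced a ha b hb hab with ⟨i, hi, rfl, rfl⟩ | ⟨i, hi, rfl, rfl⟩ | ⟨i, hi, rfl, rfl⟩
      · exact Or.inl ⟨i, hi, hP' _ hi.le, hP' _ (Nat.succ_le_of_lt hi)⟩
      · exact Or.inr (Or.inl ⟨i, hi, hQ' _ hi.le, hQ' _ (Nat.succ_le_of_lt hi)⟩)
      · exact Or.inr (Or.inr ⟨i, hi, hR' _ hi.le, hR' _ (Nat.succ_le_of_lt hi)⟩)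
    · rintro (⟨i, hi, rfl, rfl⟩ | ⟨i, hi, rfl, rfl⟩ | ⟨i, hi, rfl, rfl⟩)
      · simpa only [hP' _ hi.le, hP' _ (Nat.succ_le_of_lt hi)] using hParc i hi
      · simpa only [hQ' _ hi.le, hQ' _ (Nat.succ_le_of_lt hi)] using hQarc i hi
      · simpa only [hR' _ hi.le, hR' _ (Nat.succ_le_of_lt hi)] using hRarc i hi

end Cherry

section Fork

variable {V : Type*} {G : V → V → Prop}

theorem image_update_Iic (f : ℕ → V) (n : ℕ) (v : V) :
    Function.update f (n + 1) v '' Set.Iic (n + 1) = insert v (f '' Set.Iic n) := by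
  rw [← Order.succ_eq_add_one, Order.Iic_succ, Set.image_insert_eq, Function.update_self]
  exact congrArg _ (Set.EqOn.image_eq fun r hr =>
    Function.update_of_ne (ne_of_lt (Order.lt_succ_of_le hr)) _ _)

/-- Two directed paths `X 0, …, X (c + a)` and `Y 0, …, Y (c + b)` that share exactly the stem
`X 0 = Y 0, …, X c = Y c`. -/
structure IsFork (G : V → V → Prop) (X Y : ℕ → V) (c a b : ℕ) : Prop where
  injOn_left : Set.InjOn X (Set.Iic (c + a))
  injOn_right : Set.InjOn Y (Set.Iic (c + b))
  arc_left : ∀ r < c + a, G (X r) (X (r + 1))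
  arc_right : ∀ r < c + b, G (Y r) (Y (r + 1))
  eq_of_le : ∀ r ≤ c, X r = Y r
  le_of_eq : ∀ r ≤ c + a, ∀ r' ≤ c + b, X r = Y r' → r = r' ∧ r ≤ c

def forkSupport (X Y : ℕ → V) (c a b : ℕ) : Set V := X '' Set.Iic (c + a) ∪ Y '' Set.Iic (c + b)

def IsBranchArc (X Y : ℕ → V) (c a b : ℕ) (u w : V) : Prop :=
  (∃ r < c + a, X r = u ∧ X (r + 1) = w) ∨ (∃ r < c + b, Y r = u ∧ Y (r + 1) = w)

theorem forkSupport_update_left (X Y : ℕ → V) (c a b : ℕ) (v : V) :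
    forkSupport (Function.update X (c + a + 1) v) Y c (a + 1) b =
      insert v (forkSupport X Y c a b) := by
  rw [forkSupport, forkSupport, ← Set.insert_union, ← image_update_Iic]
  rfl

theorem forkSupport_update_right (X Y : ℕ → V) (c a b : ℕ) (v : V) :
    forkSupport X (Function.update Y (c + b + 1) v) c a (b + 1) =
      insert v (forkSupport X Y c a b) := by
  rw [forkSupport, forkSupport, ← Set.union_insert, ← image_update_Iic]
  rfl

def closedBranch (X Y : ℕ → V) (c a b : ℕ) : ℕ → V :=
  Function.update (fun r => X (c + r)) (a + 1) (Y (c + b))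

section ClosedBranch

variable {X Y : ℕ → V} {c a b : ℕ}

theorem closedBranch_of_le {r : ℕ} (hr : r ≤ a) : closedBranch X Y c a b r = X (c + r) :=
  Function.update_of_ne (by omega) _ _

theorem closedBranch_succ : closedBranch X Y c a b (a + 1) = Y (c + b) :=
  Function.update_self ..

theorem cherryPaths_subset_forkSupport :
    X '' Set.Iic c ∪ closedBranch X Y c a b '' Set.Iic (a + 1) ∪
      (fun r => Y (c + r)) '' Set.Iic b ⊆ forkSupport X Y c a b := by
  rintro w ((⟨r, hr, rfl⟩ | ⟨r, hr, rfl⟩) | ⟨r, hr, rfl⟩)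
  · exact Or.inl ⟨r, Set.mem_Iic.2 (le_trans hr (Nat.le_add_right c a)), rfl⟩
  · rcases Nat.le_succ_iff.mp hr with hr | rfl
    · exact Or.inl ⟨c + r, Set.mem_Iic.2 (by omega), (closedBranch_of_le hr).symm⟩
    · exact Or.inr ⟨c + b, Set.mem_Iic.2 le_rfl, closedBranch_succ.symm⟩
  · exact Or.inr ⟨c + r, Set.mem_Iic.2 (by grind), rfl⟩

end ClosedBranch

namespace IsFork

variable {X Y : ℕ → V} {c a b : ℕ}

theorem symm (h : IsFork G X Y c a b) : IsFork G Y X c b a where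
  injOn_left := h.injOn_right
  injOn_right := h.injOn_left
  arc_left := h.arc_right
  arc_right := h.arc_left
  eq_of_le r hr := (h.eq_of_le r hr).symm
  le_of_eq r hr r' hr' hYX := by
    obtain ⟨rfl, hrc⟩ := h.le_of_eq r' hr' r hr hYX.symm
    exact ⟨rfl, hrc⟩

theorem update (h : IsFork G X Y c a b) {v : V} (hvX : ∀ r ≤ c + a, X r ≠ v)
    (hvY : ∀ r ≤ c + b, Y r ≠ v) (hv : G (X (c + a)) v) :
    IsFork G (Function.update X (c + a + 1) v) Y c (a + 1) b := by
  have hX' {r : ℕ} (hr : r ≤ c + a) : Function.update X (c + a + 1) v r = X r :=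
    Function.update_of_ne (by omega) _ _
  have hcases {r : ℕ} (hr : r ≤ c + (a + 1)) : r ≤ c + a ∨ r = c + a + 1 := by omega
  refine ⟨fun r hr r' hr' hrr' => ?_, h.injOn_right, fun r hr => ?_, h.arc_right,
    fun r hr => (hX' (by omega)).trans (h.eq_of_le r hr), fun r hr r' hr' hrr' => ?_⟩
  · rcases hcases hr with hr | rfl <;> rcases hcases hr' with hr' | rfl
    · rw [hX' hr, hX' hr'] at hrr'
      exact h.injOn_left hr hr' hrr'
    · rw [hX' hr, Function.update_self] at hrr'
      exact absurd hrr' (hvX r hr)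
    · rw [hX' hr', Function.update_self] at hrr'
      exact absurd hrr'.symm (hvX r' hr')
    · rfl
  · rcases Nat.lt_or_ge r (c + a) with hr' | hr'
    · rw [hX' hr'.le, hX' hr']
      exact h.arc_left r hr'
    · rw [show r = c + a by omega, hX' le_rfl, Function.update_self]
      exact hv
  · rcases hcases hr with hr | rfl
    · rw [hX' hr] at hrr'
      exact h.le_of_eq r hr r' hr' hrr'
    · rw [Function.update_self] at hrr'
      exact absurd hrr'.symm (hvY r' hr')

theorem injOn_closedBranch (h : IsFork G X Y c a b) (hb : 1 ≤ b) :
    ∀ i ≤ a + 1, ∀ j ≤ a + 1, closedBranch X Y c a b i = closedBranch X Y c a b j → i = j := by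
  intro i hi j hj hij
  rcases Nat.le_succ_iff.mp hi with hi | rfl <;> rcases Nat.le_succ_iff.mp hj with hj | rfl
  · rw [closedBranch_of_le hi, closedBranch_of_le hj] at hij
    have := h.injOn_left (Set.mem_Iic.2 (by omega)) (Set.mem_Iic.2 (by omega)) hij
    omega
  · rw [closedBranch_of_le hi, closedBranch_succ] at hij
    have := h.le_of_eq _ (by omega) _ le_rfl hij
    omega
  · rw [closedBranch_succ, closedBranch_of_le hj] at hij
    have := h.le_of_eq _ (by omega) _ le_rfl hij.symm
    omega
  · rfl

theorem closedBranch_eq_right (h : IsFork G X Y c a b) :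
    ∀ i ≤ a + 1, ∀ j ≤ b, closedBranch X Y c a b i = Y (c + j) →
      (i = 0 ∧ j = 0) ∨ (i = a + 1 ∧ j = b) := by
  intro i hi j hj hij
  rcases Nat.le_succ_iff.mp hi with hi | rfl
  · rw [closedBranch_of_le hi] at hij
    have := h.le_of_eq _ (by omega) _ (by omega) hij
    omega
  · rw [closedBranch_succ] at hij
    have := h.injOn_right (Set.mem_Iic.2 le_rfl) (Set.mem_Iic.2 (by omega)) hij
    omega

theorem left_eq_closedBranch (h : IsFork G X Y c a b) (hb : 1 ≤ b) :
    ∀ i ≤ c, ∀ j ≤ a + 1, X i = closedBranch X Y c a b j → i = c ∧ j = 0 := by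
  intro i hi j hj hij
  rcases Nat.le_succ_iff.mp hj with hj | rfl
  · rw [closedBranch_of_le hj] at hij
    have := h.injOn_left (Set.mem_Iic.2 (by omega)) (Set.mem_Iic.2 (by omega)) hij
    omega
  · rw [closedBranch_succ] at hij
    have := h.le_of_eq _ (by omega) _ le_rfl hij
    omega

theorem cherryArc_of_branchArc (h : IsFork G X Y c a b) {u w : V}
    (huw : IsBranchArc X Y c a b u w ∨ (u = X (c + a) ∧ w = Y (c + b))) :
    (∃ i < c, X i = u ∧ X (i + 1) = w) ∨
      (∃ i < a + 1, closedBranch X Y c a b i = u ∧ closedBranch X Y c a b (i + 1) = w) ∨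
      (∃ i < b, Y (c + i) = u ∧ Y (c + (i + 1)) = w) := by
  rcases huw with (⟨r, hr, rfl, rfl⟩ | ⟨r, hr, rfl, rfl⟩) | ⟨rfl, rfl⟩
  · rcases Nat.lt_or_ge r c with hrc | hrc
    · exact Or.inl ⟨r, hrc, rfl, rfl⟩
    · obtain ⟨k, rfl⟩ := Nat.exists_eq_add_of_le hrc
      exact Or.inr (Or.inl ⟨k, by omega, closedBranch_of_le (by omega),
        closedBranch_of_le (by omega)⟩)
  · rcases Nat.lt_or_ge r c with hrc | hrc
    · exact Or.inl ⟨r, hrc, h.eq_of_le r hrc.le, h.eq_of_le (r + 1) hrc⟩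
    · obtain ⟨k, rfl⟩ := Nat.exists_eq_add_of_le hrc
      exact Or.inr (Or.inr ⟨k, by omega, rfl, rfl⟩)
  · exact Or.inr (Or.inl ⟨a, by omega, closedBranch_of_le le_rfl, closedBranch_succ⟩)

/-- The stem of the cherry is `X 0, …, X c`; its two paths are the branches from `X c = Y c`,
the first one continued by the closing arc `X (c + a) → Y (c + b)`. -/
theorem exists_isCherryAt (h : IsFork G X Y c a b) {s : V} (hX0 : X 0 = s) (hb : 1 ≤ b)
    (hlong : 1 ≤ a ∨ 2 ≤ b) (hclose : G (X (c + a)) (Y (c + b)))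
    (hinduced : ∀ u ∈ forkSupport X Y c a b, ∀ w ∈ forkSupport X Y c a b, G u w →
      IsBranchArc X Y c a b u w ∨ (u = X (c + a) ∧ w = Y (c + b))) :
    ∃ (Z : Set V) (hs : s ∈ Z), IsCherryAt (fun u w : Z => G u.1 w.1) ⟨s, hs⟩ := by
  have hQ0 : closedBranch X Y c a b 0 = X c := closedBranch_of_le (Nat.zero_le a)
  refine exists_isCherryAt_of_paths (P := X) (Q := closedBranch X Y c a b)
    (R := fun r => Y (c + r)) (by omega) hb (by omega) hX0 hQ0.symm
    (hQ0.trans (h.eq_of_le c le_rfl)) closedBranch_succ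
    (fun i hi j hj => h.injOn_left (Set.mem_Iic.2 (by omega)) (Set.mem_Iic.2 (by omega)))
    (h.injOn_closedBranch hb)
    (fun i hi j hj hij => by
      have := h.injOn_right (Set.mem_Iic.2 (by omega)) (Set.mem_Iic.2 (by omega)) hij
      omega)
    (fun i hi => h.arc_left i (by omega)) (fun i hi => ?_) (fun i hi => h.arc_right _ (by omega))
    h.closedBranch_eq_right (h.left_eq_closedBranch hb)
    (fun i hi j hj hij => by have := h.le_of_eq _ (by omega) _ (by omega) hij; omega)
    fun u hu w hw huw => h.cherryArc_of_branchArc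
      (hinduced u (cherryPaths_subset_forkSupport hu) w (cherryPaths_subset_forkSupport hw) huw)
  rcases Nat.lt_succ_iff_lt_or_eq.mp hi with hi | rfl
  · rw [closedBranch_of_le hi.le, closedBranch_of_le hi]
    exact h.arc_left _ (by omega)
  · rw [closedBranch_of_le le_rfl, closedBranch_succ]
    exact hclose

theorem exists_isCherryAt_of_arcs_into (h : IsFork G X Y c a b) {s y : V} (hX0 : X 0 = s)
    (hlong : 1 ≤ a ∨ 1 ≤ b) (hyy : ¬ G y y)
    (hyX : ∀ r ≤ c + a, X r ≠ y) (hyY : ∀ r ≤ c + b, Y r ≠ y)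
    (hXy : G (X (c + a)) y) (hYy : G (Y (c + b)) y)
    (hinduced : ∀ u ∈ forkSupport X Y c a b, ∀ w ∈ forkSupport X Y c a b, G u w →
      IsBranchArc X Y c a b u w)
    (hout : ∀ w ∈ forkSupport X Y c a b, ¬ G y w)
    (hin : ∀ w ∈ forkSupport X Y c a b, G w y → w = X (c + a) ∨ w = Y (c + b)) :
    ∃ (Z : Set V) (hs : s ∈ Z), IsCherryAt (fun u w : Z => G u.1 w.1) ⟨s, hs⟩ := by
  have hY' {r : ℕ} (hr : r ≤ c + b) : Function.update Y (c + b + 1) y r = Y r :=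
    Function.update_of_ne (by omega) _ _
  have hY'y : Function.update Y (c + b + 1) y (c + (b + 1)) = y := Function.update_self ..
  refine (h.symm.update hyY hyX hYy).symm.exists_isCherryAt hX0 (by omega) (by omega)
    (by rw [hY'y]; exact hXy) ?_
  rw [forkSupport_update_right]
  rintro u (rfl | hu) w (rfl | hw) huw
  · exact absurd huw hyy
  · exact absurd huw (hout w hw)
  · rcases hin u hu huw with rfl | rfl
    · exact Or.inr ⟨rfl, hY'y.symm⟩
    · exact Or.inl (Or.inr ⟨c + b, by omega, hY' le_rfl, hY'y⟩)
  · rcases hinduced u hu w hw huw with ⟨r, hr, rfl, rfl⟩ | ⟨r, hr, rfl, rfl⟩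
    · exact Or.inl (Or.inl ⟨r, hr, rfl, rfl⟩)
    · exact Or.inl (Or.inr ⟨r, by omega, hY' hr.le, hY' hr⟩)

theorem exists_isCherryAt_of_arc_through (h : IsFork G X Y c a b) {s y : V}
    (hX0 : X 0 = s) (hb : 1 ≤ b) (hyy : ¬ G y y)
    (hyX : ∀ r ≤ c + a, X r ≠ y) (hyY : ∀ r ≤ c + b, Y r ≠ y)
    (hXy : G (X (c + a)) y) (hyY' : G y (Y (c + b)))
    (hinduced : ∀ u ∈ forkSupport X Y c a b, ∀ w ∈ forkSupport X Y c a b, G u w →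
      IsBranchArc X Y c a b u w)
    (hout : ∀ w ∈ forkSupport X Y c a b, G y w → w = Y (c + b))
    (hin : ∀ w ∈ forkSupport X Y c a b, G w y → w = X (c + a)) :
    ∃ (Z : Set V) (hs : s ∈ Z), IsCherryAt (fun u w : Z => G u.1 w.1) ⟨s, hs⟩ := by
  have hX' {r : ℕ} (hr : r ≤ c + a) : Function.update X (c + a + 1) y r = X r :=
    Function.update_of_ne (by omega) _ _
  have hX'y : Function.update X (c + a + 1) y (c + (a + 1)) = y := Function.update_self ..
  refine (h.update hyX hyY hXy).exists_isCherryAt ((hX' (Nat.zero_le _)).trans hX0) hb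
    (by omega) (by rw [hX'y]; exact hyY') ?_
  rw [forkSupport_update_left]
  rintro u (rfl | hu) w (rfl | hw) huw
  · exact absurd huw hyy
  · obtain rfl := hout w hw huw
    exact Or.inr ⟨hX'y.symm, rfl⟩
  · obtain rfl := hin u hu huw
    exact Or.inl (Or.inl ⟨c + a, by omega, hX' le_rfl, hX'y⟩)
  · rcases hinduced u hu w hw huw with ⟨r, hr, rfl, rfl⟩ | ⟨r, hr, rfl, rfl⟩
    · exact Or.inl (Or.inl ⟨r, by omega, hX' hr.le, hX' hr⟩)
    · exact Or.inl (Or.inr ⟨r, hr, rfl, rfl⟩)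

theorem eq_or_mem_image_of_adj (h : IsFork G X Y c a b) {y : V}
    (hmid : ∀ r, c < r → r < c + b → ¬ (G (Y r) y ∨ G y (Y r))) :
    ∀ w ∈ forkSupport X Y c a b, (G w y ∨ G y w) → w = Y (c + b) ∨ w ∈ X '' Set.Iic (c + a) := by
  rintro w (hw | ⟨r, hr, rfl⟩) hwy
  · exact Or.inr hw
  rcases Nat.lt_or_ge c r with hcr | hrc
  · rcases Nat.lt_or_ge r (c + b) with hrb | hrb
    · exact absurd hwy (hmid r hcr hrb)
    · exact Or.inl (by rw [show r = c + b from le_antisymm hr hrb])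
  · exact Or.inr ⟨r, Set.mem_Iic.2 (by omega), h.eq_of_le r hrc⟩

theorem eq_of_arc_from (h : IsFork G X Y c a b) {y : V}
    (hmid : ∀ r, c < r → r < c + b → ¬ (G (Y r) y ∨ G y (Y r)))
    (hout : ∀ r ≤ c + a, ¬ G y (X r)) :
    ∀ w ∈ forkSupport X Y c a b, G y w → w = Y (c + b) := by
  intro w hw hyw
  rcases h.eq_or_mem_image_of_adj hmid w hw (Or.inr hyw) with hw | ⟨r, hr, rfl⟩
  exacts [hw, absurd hyw (hout r hr)]

theorem eq_or_eq_of_arc_to (h : IsFork G X Y c a b) {y : V}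
    (hmid : ∀ r, c < r → r < c + b → ¬ (G (Y r) y ∨ G y (Y r)))
    (hin : ∀ r < c + a, ¬ G (X r) y) :
    ∀ w ∈ forkSupport X Y c a b, G w y → w = X (c + a) ∨ w = Y (c + b) := by
  intro w hw hwy
  rcases h.eq_or_mem_image_of_adj hmid w hw (Or.inl hwy) with hw | ⟨r, hr, rfl⟩
  · exact Or.inr hw
  rcases (Set.mem_Iic.1 hr).lt_or_eq with hr | rfl
  exacts [absurd hwy (hin r hr), Or.inl rfl]

end IsFork

end Fork

section Tree

variable {V : Type*} {G : V → V → Prop} {m : ℕ} {t : ℕ → V} {par p q : ℕ → ℕ} {n n' : ℕ}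

theorem IsRootPath.arc (hpar : ∀ k, 1 ≤ k → k ≤ m → par k < k ∧ G (t (par k)) (t k))
    (hp : IsRootPath m par p n) {r : ℕ} (hr : r < n) : G (t (p r)) (t (p (r + 1))) := by
  simpa only [hp.par_succ r hr] using (hpar _ (hp.one_le r hr) (hp.le _ hr)).2

theorem IsRootPath.exists_eq_of_arc
    (hinduced : ∀ i ≤ m, ∀ j ≤ m, G (t i) (t j) → 1 ≤ j ∧ i = par j)
    (hp : IsRootPath m par p n) {k r : ℕ} (hk : k ≤ m) (hr : r ≤ n) (h : G (t k) (t (p r))) :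
    ∃ r' < n, p r' = k ∧ r' + 1 = r := by
  obtain ⟨h1, rfl⟩ := hinduced k hk (p r) (hp.le r hr) h
  rcases r with _ | r
  · rw [hp.apply_zero] at h1
    omega
  · exact ⟨r, by omega, (hp.par_succ r (by omega)).symm, rfl⟩

theorem IsRootPath.exists_isFork (hinj : ∀ i ≤ m, ∀ j ≤ m, t i = t j → i = j)
    (hpar : ∀ k, 1 ≤ k → k ≤ m → par k < k ∧ G (t (par k)) (t k))
    (hp : IsRootPath m par p n) (hq : IsRootPath m par q n') :
    ∃ c a b, n = c + a ∧ n' = c + b ∧ IsFork G (t ∘ p) (t ∘ q) c a b := by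
  obtain ⟨c, hcn, hcn', hstem, hlca⟩ := hp.exists_lca hq
  obtain ⟨a, rfl⟩ := Nat.exists_eq_add_of_le hcn
  obtain ⟨b, rfl⟩ := Nat.exists_eq_add_of_le hcn'
  refine ⟨c, a, b, rfl, rfl, fun r hr r' hr' h => ?_, fun r hr r' hr' h => ?_,
    fun r hr => hp.arc hpar hr, fun r hr => hq.arc hpar hr,
    fun r hr => congrArg t (hstem r hr),
    fun r hr r' hr' h => hlca r hr r' hr' (hinj _ (hp.le r hr) _ (hq.le r' hr') h)⟩
  · exact (hp.eq_of_apply_eq hp hr hr' (hinj _ (hp.le r hr) _ (hp.le r' hr') h)).1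
  · exact (hq.eq_of_apply_eq hq hr hr' (hinj _ (hq.le r hr) _ (hq.le r' hr') h)).1

theorem IsRootPath.isBranchArc_of_arc
    (hinduced : ∀ i ≤ m, ∀ j ≤ m, G (t i) (t j) → 1 ≤ j ∧ i = par j) {c a b : ℕ}
    (hp : IsRootPath m par p (c + a)) (hq : IsRootPath m par q (c + b)) :
    ∀ u ∈ forkSupport (t ∘ p) (t ∘ q) c a b, ∀ w ∈ forkSupport (t ∘ p) (t ∘ q) c a b, G u w →
      IsBranchArc (t ∘ p) (t ∘ q) c a b u w := by
  have htree : ∀ u ∈ forkSupport (t ∘ p) (t ∘ q) c a b, ∃ k ≤ m, t k = u := by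
    rintro u (⟨r, hr, rfl⟩ | ⟨r, hr, rfl⟩)
    exacts [⟨_, hp.le r hr, rfl⟩, ⟨_, hq.le r hr, rfl⟩]
  rintro u hu w (⟨r, hr, rfl⟩ | ⟨r, hr, rfl⟩) huw <;> obtain ⟨k, hk, rfl⟩ := htree u hu
  · obtain ⟨r, hr', rfl, rfl⟩ := hp.exists_eq_of_arc hinduced hk hr huw
    exact Or.inl ⟨r, hr', rfl, rfl⟩
  · obtain ⟨r, hr', rfl, rfl⟩ := hq.exists_eq_of_arc hinduced hk hr huw
    exact Or.inr ⟨r, hr', rfl, rfl⟩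

end Tree

section IBFS

variable {V : Type*} {G : V → V → Prop} {s : V} {m : ℕ} {t : ℕ → V} {par p : ℕ → ℕ} {n : ℕ}

theorem exists_isCherryAt_of_rootPaths (horient : ∀ a b, G a b → ¬ G b a) (ht0 : t 0 = s)
    (hinj : ∀ i ≤ m, ∀ j ≤ m, t i = t j → i = j)
    (hpar : ∀ k, 1 ≤ k → k ≤ m → par k < k ∧ G (t (par k)) (t k))
    (hinduced : ∀ i ≤ m, ∀ j ≤ m, G (t i) (t j) → 1 ≤ j ∧ i = par j)
    {q : ℕ → ℕ} {n' : ℕ} (hp : IsRootPath m par p n) (hq : IsRootPath m par q n')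
    {y : V} (hyT : ∀ j ≤ m, t j ≠ y) (hxy : G (t (p n)) y)
    (hout : ∀ r ≤ n, ¬ G y (t (p r))) (hin : ∀ r < n, ¬ G (t (p r)) y)
    (hjx : q n' ≠ p n) (hjy : G (t (q n')) y ∨ G y (t (q n')))
    (hmid : ∀ r, 1 ≤ r → r < n' → q r ≠ p n → ¬ (G (t (q r)) y ∨ G y (t (q r)))) :
    ∃ (X : Set V) (hs : s ∈ X), IsCherryAt (fun a b : X => G a.1 b.1) ⟨s, hs⟩ := by
  obtain ⟨c, a, b, rfl, rfl, hF⟩ := hp.exists_isFork hinj hpar hq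
  have hs : (t ∘ p) 0 = s := (congrArg t hp.apply_zero).trans ht0
  have hyX (r : ℕ) (hr : r ≤ c + a) : (t ∘ p) r ≠ y := hyT _ (hp.le r hr)
  have hyY (r : ℕ) (hr : r ≤ c + b) : (t ∘ q) r ≠ y := hyT _ (hq.le r hr)
  have hmid' (r : ℕ) (hcr : c < r) (hrb : r < c + b) : ¬ (G (t (q r)) y ∨ G y (t (q r))) :=
    hmid r (by omega) hrb fun h => by
      have := hF.le_of_eq (c + a) le_rfl r hrb.le (congrArg t h).symm
      omega
  have hout' := hF.eq_of_arc_from hmid' hout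
  have hin' := hF.eq_or_eq_of_arc_to hmid' hin
  have hyy : ¬ G y y := fun h => horient y y h h
  have htree := hp.isBranchArc_of_arc hinduced hq
  rcases hjy with hjy | hjy
  · refine hF.exists_isCherryAt_of_arcs_into hs ?_ hyy hyX hyY hxy hjy htree
      (fun w hw hyw => ?_) hin'
    · by_contra! hab
      obtain ⟨rfl, rfl⟩ : a = 0 ∧ b = 0 := by omega
      exact hjx (hinj _ (hq.le c le_rfl) _ (hp.le c le_rfl) (hF.eq_of_le c le_rfl).symm)
    · obtain rfl := hout' w hw hyw
      exact horient _ _ hjy hyw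
  · refine hF.exists_isCherryAt_of_arc_through hs ?_ hyy hyX hyY hxy hjy htree hout'
      fun w hw hwy => (hin' w hw hwy).resolve_right ?_
    · by_contra! hb
      obtain rfl : b = 0 := by omega
      have hstem : t (p c) = t (q c) := hF.eq_of_le c le_rfl
      exact hout c (by omega) (by rw [hstem]; exact hjy)
    · rintro rfl
      exact horient _ _ hjy hwy

theorem exists_isCherryAt_of_adj (horient : ∀ a b, G a b → ¬ G b a) (ht0 : t 0 = s)
    (hinj : ∀ i ≤ m, ∀ j ≤ m, t i = t j → i = j)
    (hpar : ∀ k, 1 ≤ k → k ≤ m → par k < k ∧ G (t (par k)) (t k))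
    (hmono : ∀ k l, 1 ≤ k → k ≤ l → l ≤ m → par k ≤ par l)
    (hinduced : ∀ i ≤ m, ∀ j ≤ m, G (t i) (t j) → 1 ≤ j ∧ i = par j)
    (hp : IsRootPath m par p n) {y : V} (hyT : ∀ j ≤ m, t j ≠ y) (hxy : G (t (p n)) y)
    (hout : ∀ r ≤ n, ¬ G y (t (p r))) (hin : ∀ r < n, ¬ G (t (p r)) y) {j : ℕ} (hj : j ≤ m)
    (hjx : j ≠ p n) (hjy : G (t j) y ∨ G y (t j)) (hjpar : j = 0 ∨ par j ≤ p n) :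
    ∃ (X : Set V) (hs : s ∈ X), IsCherryAt (fun a b : X => G a.1 b.1) ⟨s, hs⟩ := by
  have hpar' k h1 h2 := (hpar k h1 h2).1
  induction j using Nat.strong_induction_on with
  | _ j ih =>
  obtain ⟨n', q, hq, rfl⟩ := exists_isRootPath hpar' hj
  by_cases hmid : ∃ r, 1 ≤ r ∧ r < n' ∧ q r ≠ p n ∧ (G (t (q r)) y ∨ G y (t (q r)))
  · obtain ⟨r, hr1, hrn, hrx, hry⟩ := hmid
    have hqmono := hq.strictMonoOn hpar'
    have h0r : q 0 < q r := hqmono (Set.mem_Iic.2 (Nat.zero_le _)) (Set.mem_Iic.2 hrn.le) hr1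
    have hrn' : q r < q n' := hqmono (Set.mem_Iic.2 hrn.le) (Set.mem_Iic.2 le_rfl) hrn
    rw [hq.apply_zero] at h0r
    -- a proper ancestor of `j` also qualifies, and it is visited earlier
    refine ih (q r) hrn' (hq.le r hrn.le) hrx hry
      (Or.inr ((hmono _ _ h0r hrn'.le hj).trans (hjpar.resolve_left (by omega))))
  · exact exists_isCherryAt_of_rootPaths horient ht0 hinj hpar hinduced hp hq hyT hxy hout hin
      hjx hjy fun r hr1 hrn hrx hry => hmid ⟨r, hr1, hrn, hrx, hry⟩

end IBFS

/-- The IBFS tree has vertices `t 0 = s, t 1, …, t m` in order of addition and parent function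
`par`; `hmax` records that an out-neighbour `y ∉ T` of `t i` was rejected because `y` already had
another neighbour `t j` in the tree when `t i` was visited. -/
theorem stmt10 {V : Type} (G : V → V → Prop) (horient : ∀ a b, G a b → ¬ G b a)
    (s : V) (m : ℕ) (t : ℕ → V) (par : ℕ → ℕ)
    (ht0 : t 0 = s)
    (hinj : ∀ i ≤ m, ∀ j ≤ m, t i = t j → i = j)
    (hpar : ∀ k, 1 ≤ k → k ≤ m → par k < k ∧ G (t (par k)) (t k))
    (hmono : ∀ k l, 1 ≤ k → k ≤ l → l ≤ m → par k ≤ par l)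
    (hinduced : ∀ i ≤ m, ∀ j ≤ m, G (t i) (t j) → 1 ≤ j ∧ i = par j)
    (hmax : ∀ i ≤ m, ∀ y : V, (∀ j ≤ m, t j ≠ y) → G (t i) y →
      ∃ j ≤ m, j ≠ i ∧ (G (t j) y ∨ G y (t j)) ∧ (j = 0 ∨ par j ≤ i))
    (x : ℕ) (hx : x ≤ m) (y : V)
    (hyT : ∀ j ≤ m, t j ≠ y) (hxy : G (t x) y)
    (hanc : ∀ j ≤ m, G y (t j) →
      ¬ Relation.ReflTransGen (fun p q : ℕ => p = par q ∧ 1 ≤ q ∧ q ≤ m) j x) :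
    ∃ (X : Set V) (hs : s ∈ X), IsCherryAt (fun a b : X => G a.1 b.1) ⟨s, hs⟩ := by
  have hpar' k h1 h2 := (hpar k h1 h2).1
  induction x using Nat.strong_induction_on generalizing y with
  | _ x ih =>
  obtain ⟨n, p, hp, rfl⟩ := exists_isRootPath hpar' hx
  have hout (r : ℕ) (hr : r ≤ n) : ¬ G y (t (p r)) := fun hyr =>
    hanc _ (hp.le r hr) hyr (hp.reflTransGen hr)
  by_cases hin : ∃ r < n, G (t (p r)) y
  · -- then a proper ancestor of `x` already fails condition (ii)
    obtain ⟨r, hrn, hry⟩ := hin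
    exact ih (p r) (hp.strictMonoOn hpar' (Set.mem_Iic.2 hrn.le) (Set.mem_Iic.2 le_rfl) hrn)
      (hp.le r hrn.le) y hyT hry fun l hl hyl hlr =>
        hanc l hl hyl (hlr.trans (hp.reflTransGen hrn.le))
  · obtain ⟨j, hj, hjx, hjy, hjpar⟩ := hmax _ hx y hyT hxy
    exact exists_isCherryAt_of_adj horient ht0 hinj hpar hmono hinduced hp hyT hxy hout
      (fun r hrn hry => hin ⟨r, hrn, hry⟩) hj hjx hjy hjpar
end

section
/- Let G be an oriented graph, s a vertex, and T an induced out-tree rooted at s produced by IBFS such that every vertex x of T satisfies: every out-neighbour of x not in T has an out-neighbour among the ancestors of x in T. Then G contains no induced cherry rooted at s. -/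
/-!
Every arc of an induced cherry between vertices of one of its two branches `s ⇝ u ⇝ v` points
forward along the branch. Walking along a branch from `s`, we stay inside `T`: a branch vertex
outside `T` would have an out-neighbour among the ancestors of its predecessor, all of which are
earlier branch vertices, giving a backward arc. Hence the in-neighbours of `v` on the two branches
both lie in `T`; as `T` is induced, both are the parent of `v`, but they are distinct.
-/

def IsForwardWalk {α : Type*} (H : α → α → Prop) (W : ℕ → α) (n : ℕ) : Prop :=
  (∀ i < n, H (W i) (W (i + 1))) ∧ ∀ i ≤ n, ∀ l ≤ n, H (W i) (W l) → i < l

def IsTreeAncestor (par : ℕ → ℕ) (m : ℕ) : ℕ → ℕ → Prop :=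
  Relation.ReflTransGen fun p q => p = par q ∧ 1 ≤ q ∧ q ≤ m

section Tree

variable {par : ℕ → ℕ} {m : ℕ}

theorem IsTreeAncestor.eq_zero {j : ℕ} (h : IsTreeAncestor par m j 0) : j = 0 := by
  rcases Relation.ReflTransGen.cases_tail h with h | ⟨_, _, h⟩
  · exact h.symm
  · exact absurd h.2.1 (by omega)

theorem IsTreeAncestor.eq_or_of_parent {j c : ℕ} (h : IsTreeAncestor par m j c) :
    j = c ∨ IsTreeAncestor par m j (par c) := by
  rcases Relation.ReflTransGen.cases_tail h with h | ⟨_, hb, h⟩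
  · exact Or.inl h.symm
  · exact Or.inr (h.1 ▸ hb)

variable {V : Type*} {G : V → V → Prop} {t : ℕ → V}

theorem IsForwardWalk.exists_tree_index
    (hparent : ∀ i ≤ m, ∀ j ≤ m, G (t i) (t j) → i = par j)
    (hii : ∀ i ≤ m, ∀ y : V, (∀ j ≤ m, t j ≠ y) → G (t i) y →
      ∃ j ≤ m, G y (t j) ∧ IsTreeAncestor par m j i)
    {W : ℕ → V} {n : ℕ} (hW : IsForwardWalk G W n) (h0 : W 0 = t 0) :
    ∀ i ≤ n, ∃ k ≤ m, t k = W i ∧ ∀ j, IsTreeAncestor par m j k → ∃ l ≤ i, t j = W l := by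
  intro i
  induction i with
  | zero =>
    intro _
    exact ⟨0, Nat.zero_le m, h0.symm, fun j hj => ⟨0, le_rfl, by rw [hj.eq_zero, h0]⟩⟩
  | succ i ih =>
    intro hi
    obtain ⟨k, hkm, hk, hanc⟩ := ih (by omega)
    have harc : G (t k) (W (i + 1)) := hk ▸ hW.1 i hi
    by_cases hT : ∃ c ≤ m, t c = W (i + 1)
    · obtain ⟨c, hcm, hc⟩ := hT
      have hkc : k = par c := hparent k hkm c hcm (hc ▸ harc)
      refine ⟨c, hcm, hc, fun j hj => ?_⟩
      rcases hj.eq_or_of_parent with rfl | hj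
      · exact ⟨i + 1, le_rfl, hc⟩
      · obtain ⟨l, hl, hjl⟩ := hanc j (hkc ▸ hj)
        exact ⟨l, by omega, hjl⟩
    · push Not at hT
      obtain ⟨j, -, hback, hj⟩ := hii k hkm _ hT harc
      obtain ⟨l, hl, hjl⟩ := hanc j hj
      have := hW.2 (i + 1) hi l (by omega) (hjl ▸ hback)
      omega

end Tree

section Cherry

variable {α : Type*}

def pathAppend (P Q : ℕ → α) (n i : ℕ) : α :=
  if i ≤ n then P i else Q (i - n)

theorem pathAppend_cases (P Q : ℕ → α) (n i : ℕ) :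
    (i ≤ n ∧ pathAppend P Q n i = P i) ∨ ∃ j, 0 < j ∧ i = n + j ∧ pathAppend P Q n i = Q j := by
  unfold pathAppend
  split_ifs with hi
  · exact Or.inl ⟨hi, rfl⟩
  · exact Or.inr ⟨i - n, by omega, by omega, rfl⟩

theorem pathAppend_add {P Q : ℕ → α} {n : ℕ} (hPQ : P n = Q 0) (j : ℕ) :
    pathAppend P Q n (n + j) = Q j := by
  unfold pathAppend
  split_ifs with h
  · obtain rfl : j = 0 := by omega
    simpa using hPQ
  · congr 1
    omega

/-- The conditions of `IsCherryAt` on `P`, `Q`, `R`, named, without the covering condition and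
the converse of `adj_cases`. -/
structure CherryPaths (H : α → α → Prop) (np nq nr : ℕ) (P Q R : ℕ → α) : Prop where
  one_le_nq : 1 ≤ nq
  one_le_nr : 1 ≤ nr
  two_le : 2 ≤ nq ∨ 2 ≤ nr
  P_np : P np = Q 0
  Q_zero : Q 0 = R 0
  Q_nq : Q nq = R nr
  P_injOn : ∀ i ≤ np, ∀ j ≤ np, P i = P j → i = j
  Q_injOn : ∀ i ≤ nq, ∀ j ≤ nq, Q i = Q j → i = j
  R_injOn : ∀ i ≤ nr, ∀ j ≤ nr, R i = R j → i = j
  P_adj : ∀ i < np, H (P i) (P (i + 1))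
  Q_adj : ∀ i < nq, H (Q i) (Q (i + 1))
  R_adj : ∀ i < nr, H (R i) (R (i + 1))
  Q_eq_R : ∀ i ≤ nq, ∀ j ≤ nr, Q i = R j → (i = 0 ∧ j = 0) ∨ (i = nq ∧ j = nr)
  P_eq_Q : ∀ i ≤ np, ∀ j ≤ nq, P i = Q j → i = np ∧ j = 0
  P_eq_R : ∀ i ≤ np, ∀ j ≤ nr, P i = R j → i = np ∧ j = 0
  adj_cases : ∀ a b, H a b →
    (∃ i < np, P i = a ∧ P (i + 1) = b) ∨ (∃ i < nq, Q i = a ∧ Q (i + 1) = b) ∨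
      (∃ i < nr, R i = a ∧ R (i + 1) = b)

namespace CherryPaths

variable {H : α → α → Prop} {np nq nr : ℕ} {P Q R : ℕ → α}

theorem swap (h : CherryPaths H np nq nr P Q R) : CherryPaths H np nr nq P R Q where
  one_le_nq := h.one_le_nr
  one_le_nr := h.one_le_nq
  two_le := h.two_le.symm
  P_np := h.P_np.trans h.Q_zero
  Q_zero := h.Q_zero.symm
  Q_nq := h.Q_nq.symm
  P_injOn := h.P_injOn
  Q_injOn := h.R_injOn
  R_injOn := h.Q_injOn
  P_adj := h.P_adj
  Q_adj := h.R_adj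
  R_adj := h.Q_adj
  Q_eq_R i hi j hj hij := (h.Q_eq_R j hj i hi hij.symm).imp And.symm And.symm
  P_eq_Q := h.P_eq_R
  P_eq_R := h.P_eq_Q
  adj_cases a b hab := (h.adj_cases a b hab).imp_right Or.symm

theorem injOn_pathAppend (h : CherryPaths H np nq nr P Q R) :
    ∀ i ≤ np + nq, ∀ l ≤ np + nq, pathAppend P Q np i = pathAppend P Q np l → i = l := by
  intro i hi l hl hil
  rcases pathAppend_cases P Q np i with ⟨hi', ei⟩ | ⟨i', hi', rfl, ei⟩ <;>
    rcases pathAppend_cases P Q np l with ⟨hl', el⟩ | ⟨l', hl', rfl, el⟩ <;>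
    rw [ei, el] at hil
  · exact h.P_injOn i hi' l hl' hil
  · have := h.P_eq_Q i hi' l' (by omega) hil
    omega
  · have := h.P_eq_Q l hl' i' (by omega) hil.symm
    omega
  · have := h.Q_injOn i' (by omega) l' (by omega) hil
    omega

theorem eq_of_pathAppend_eq_R (h : CherryPaths H np nq nr P Q R) {i j : ℕ} (hi : i ≤ np + nq)
    (hj : j ≤ nr) (hij : pathAppend P Q np i = R j) :
    (i = np ∧ j = 0) ∨ (i = np + nq ∧ j = nr) := by
  rcases pathAppend_cases P Q np i with ⟨hi', ei⟩ | ⟨i', hi', rfl, ei⟩ <;> rw [ei] at hij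
  · exact Or.inl (h.P_eq_R i hi' j hj hij)
  · have := h.Q_eq_R i' (by omega) j hj hij
    omega

theorem isForwardWalk_pathAppend (h : CherryPaths H np nq nr P Q R) :
    IsForwardWalk H (pathAppend P Q np) (np + nq) := by
  have hP : ∀ i ≤ np, pathAppend P Q np i = P i := fun i hi => if_pos hi
  have hQ := pathAppend_add h.P_np
  refine ⟨fun i hi => ?_, fun i hi l hl hil => ?_⟩
  · rcases le_or_gt np i with hi' | hi'
    · obtain ⟨j, rfl⟩ := Nat.exists_eq_add_of_le hi'
      rw [hQ, add_assoc, hQ]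
      exact h.Q_adj j (by omega)
    · rw [hP i hi'.le, hP (i + 1) hi']
      exact h.P_adj i hi'
  · rcases h.adj_cases _ _ hil with ⟨a, ha, ea, eb⟩ | ⟨a, ha, ea, eb⟩ | ⟨a, ha, ea, eb⟩
    · have := h.injOn_pathAppend a (by omega) i hi ((hP a ha.le).trans ea)
      have := h.injOn_pathAppend (a + 1) (by omega) l hl ((hP (a + 1) ha).trans eb)
      omega
    · have := h.injOn_pathAppend (np + a) (by omega) i hi ((hQ a).trans ea)
      have := h.injOn_pathAppend (np + (a + 1)) (by omega) l hl ((hQ (a + 1)).trans eb)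
      omega
    -- an arc of `R` joins two vertices of `P ++ Q` only if `nr = 1`, and it is then `u → v`
    · have := h.eq_of_pathAppend_eq_R hi ha.le ea.symm
      have := h.eq_of_pathAppend_eq_R hl ha eb.symm
      have := h.one_le_nq
      omega

end CherryPaths

theorem IsCherryAt.exists_forwardWalks {H : α → α → Prop} {s : α} (h : IsCherryAt H s) :
    ∃ (n₁ n₂ : ℕ) (W₁ W₂ : ℕ → α), W₁ 0 = s ∧ W₂ 0 = s ∧
      IsForwardWalk H W₁ (n₁ + 1) ∧ IsForwardWalk H W₂ (n₂ + 1) ∧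
      W₁ (n₁ + 1) = W₂ (n₂ + 1) ∧ W₁ n₁ ≠ W₂ n₂ := by
  obtain ⟨np, nq, nr, P, Q, R, h1q, h1r, h2, hP0, hPQ0, hQR0, hv, hPinj, hQinj, hRinj, hParc,
    hQarc, hRarc, hQR, hPQ, hPR, -, hadj⟩ := h
  have hc : CherryPaths H np nq nr P Q R := ⟨h1q, h1r, h2, hPQ0, hQR0, hv, hPinj, hQinj, hRinj,
    hParc, hQarc, hRarc, hQR, hPQ, hPR, fun a b => (hadj a b).mp⟩
  have hPR0 : P np = R 0 := hPQ0.trans hQR0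
  have e₁ : np + (nq - 1) + 1 = np + nq := by omega
  have e₂ : np + (nr - 1) + 1 = np + nr := by omega
  refine ⟨np + (nq - 1), np + (nr - 1), pathAppend P Q np, pathAppend P R np,
    (if_pos (Nat.zero_le _)).trans hP0, (if_pos (Nat.zero_le _)).trans hP0,
    e₁ ▸ hc.isForwardWalk_pathAppend, e₂ ▸ hc.swap.isForwardWalk_pathAppend, ?_, ?_⟩
  · rw [e₁, e₂, pathAppend_add hPQ0, pathAppend_add hPR0, hv]
  · rw [pathAppend_add hPQ0, pathAppend_add hPR0]
    intro heq
    have := hQR (nq - 1) (by omega) (nr - 1) (by omega) heq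
    omega

end Cherry

theorem stmt11_general {V : Type} (G : V → V → Prop)
    (s : V) (m : ℕ) (t : ℕ → V) (par : ℕ → ℕ)
    (ht0 : t 0 = s)
    (hinduced : ∀ i ≤ m, ∀ j ≤ m, G (t i) (t j) → 1 ≤ j ∧ i = par j)
    (hii : ∀ i ≤ m, ∀ y : V, (∀ j ≤ m, t j ≠ y) → G (t i) y →
      ∃ j ≤ m, G y (t j) ∧
        Relation.ReflTransGen (fun p q : ℕ => p = par q ∧ 1 ≤ q ∧ q ≤ m) j i) :
    ¬ ∃ (X : Set V) (hs : s ∈ X), IsCherryAt (fun a b : X => G a.1 b.1) ⟨s, hs⟩ := by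
  rintro ⟨X, hs, hcherry⟩
  obtain ⟨n₁, n₂, W₁, W₂, h₁0, h₂0, hW₁, hW₂, hend, hpen⟩ := hcherry.exists_forwardWalks
  have hparent : ∀ i ≤ m, ∀ j ≤ m, G (t i) (t j) → i = par j :=
    fun i hi j hj hij => (hinduced i hi j hj hij).2
  have mem_tree : ∀ {W : ℕ → X} {n : ℕ}, IsForwardWalk (fun a b : X => G a.1 b.1) W n →
      W 0 = ⟨s, hs⟩ → ∀ i ≤ n, ∃ k ≤ m, t k = W i := by
    intro W n hW h0 i hi
    obtain ⟨k, hk, hkW, -⟩ := IsForwardWalk.exists_tree_index (W := fun i => (W i).1)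
      hparent hii hW (by rw [h0, ht0]) i hi
    exact ⟨k, hk, hkW⟩
  obtain ⟨c, hc, hcv⟩ := mem_tree hW₁ h₁0 (n₁ + 1) le_rfl
  obtain ⟨k₁, hk₁, hk₁W⟩ := mem_tree hW₁ h₁0 n₁ (by omega)
  obtain ⟨k₂, hk₂, hk₂W⟩ := mem_tree hW₂ h₂0 n₂ (by omega)
  have hk₁c : k₁ = par c := hparent k₁ hk₁ c hc (by rw [hk₁W, hcv]; exact hW₁.1 n₁ (by omega))
  have hk₂c : k₂ = par c :=
    hparent k₂ hk₂ c hc (by rw [hk₂W, hcv, hend]; exact hW₂.1 n₂ (by omega))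
  exact hpen (Subtype.ext (by rw [← hk₁W, ← hk₂W, hk₁c, hk₂c]))

/-- Let `G` be an oriented graph and let `T` be an induced out-tree rooted at `s` produced by
induced breadth-first search `IBFS(G,s)` (vertices `t 0 = s, t 1, …, t m` in order of
addition, parent function `par`, the only arcs of `G` among the tree vertices being the tree
arcs, with the IBFS maximality property).  If every vertex `t i` of `T` satisfies: every
out-neighbour of `t i` not in `T` has an out-neighbour among the ancestors of `t i` in `T`
(outcome (ii) of Theorem 4.1), then `G` contains no induced cherry rooted at `s`. -/
theorem stmt11 {V : Type} (G : V → V → Prop) (horient : ∀ a b, G a b → ¬ G b a)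
    (s : V) (m : ℕ) (t : ℕ → V) (par : ℕ → ℕ)
    (ht0 : t 0 = s)
    (hinj : ∀ i ≤ m, ∀ j ≤ m, t i = t j → i = j)
    (hpar : ∀ k, 1 ≤ k → k ≤ m → par k < k ∧ G (t (par k)) (t k))
    (hmono : ∀ k l, 1 ≤ k → k ≤ l → l ≤ m → par k ≤ par l)
    (hinduced : ∀ i ≤ m, ∀ j ≤ m, G (t i) (t j) → 1 ≤ j ∧ i = par j)
    (hmax : ∀ i ≤ m, ∀ y : V, (∀ j ≤ m, t j ≠ y) → G (t i) y →
      ∃ j ≤ m, j ≠ i ∧ (G (t j) y ∨ G y (t j)) ∧ (j = 0 ∨ par j ≤ i))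
    (hii : ∀ i ≤ m, ∀ y : V, (∀ j ≤ m, t j ≠ y) → G (t i) y →
      ∃ j ≤ m, G y (t j) ∧
        Relation.ReflTransGen (fun p q : ℕ => p = par q ∧ 1 ≤ q ∧ q ≤ m) j i) :
    ¬ ∃ (X : Set V) (hs : s ∈ X), IsCherryAt (fun a b : X => G a.1 b.1) ⟨s, hs⟩ :=
  stmt11_general G s m t par ht0 hinduced hii
end

section
/- Let P be a directed path from s to t in a digraph G such that P has no forward chord, and suppose the subdigraph of G induced by V(P) contains an arc uv with u occurring after v on P and v ≠ s. Choose such an arc b_3 b_2 with b_2 as close to s as possible on P. Then the initial segment of P from s to b_2 together with the arc b_3 b_2 forms an induced subdivision of A^+_2 (an oriented path with two blocks: a forward directed path followed by one backward arc) with origin s. -/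
/-!
Every arc among the vertices `P 0, …, P j₀` goes forward, because a backward one would have a
head closer to `s` than `P j₀`; with no forward chords and no loops (orientation), it joins
consecutive vertices. The vertex `P i₀` receives no arc from this segment: a forward arc into
`P i₀` from `P k` with `k ≤ j₀ < i₀` can only be `P j₀ → P (j₀ + 1) = P i₀`, which together with
`P i₀ → P j₀` would be a digon. Arcs out of `P i₀` into the segment go to `P j₀` by minimality.
-/

/-- An induced subdivision of `A⁺₂` with origin `s` in the digraph `G`: an induced directed
path `Q 0 = s, …, Q n` of length `n ≥ 1`, together with one arc entering its terminus `Q n`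
from a vertex `w` not on the path, such that the only arcs of `G` among these vertices are
the path arcs and the arc `w → Q n`. -/
def IsInducedA2Plus {V : Type*} (G : V → V → Prop) (s : V) (n : ℕ) (Q : ℕ → V) (w : V) : Prop :=
  1 ≤ n ∧ Q 0 = s ∧
  (∀ i ≤ n, ∀ j ≤ n, Q i = Q j → i = j) ∧
  (∀ i < n, G (Q i) (Q (i + 1))) ∧
  (∀ i ≤ n, w ≠ Q i) ∧ G w (Q n) ∧
  (∀ i ≤ n, ∀ j ≤ n, G (Q i) (Q j) → j = i + 1) ∧
  (∀ i ≤ n, ¬ G (Q i) w) ∧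
  (∀ i ≤ n, G w (Q i) → i = n)

def NoForwardChord {V : Type*} (G : V → V → Prop) (n : ℕ) (P : ℕ → V) : Prop :=
  ∀ i ≤ n, ∀ j ≤ n, G (P i) (P j) → j ≤ i + 1

section NoForwardChord

variable {V : Type*} {G : V → V → Prop} {n : ℕ} {P : ℕ → V}

theorem NoForwardChord.eq_succ_of_adj_of_le (horient : ∀ a b, G a b → ¬ G b a)
    (hP : NoForwardChord G n P) {i j : ℕ} (hij : i ≤ j) (hj : j ≤ n) (h : G (P i) (P j)) :
    j = i + 1 := by
  have := hP i (hij.trans hj) j hj h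
  rcases hij.eq_or_lt with rfl | hlt
  · exact absurd h (horient _ _ h)
  · omega

theorem NoForwardChord.not_adj_tail_of_backward_adj (horient : ∀ a b, G a b → ¬ G b a)
    (hP : NoForwardChord G n P) {i j k : ℕ} (hji : j < i) (hi : i ≤ n)
    (hback : G (P i) (P j)) (hk : k ≤ j) : ¬ G (P k) (P i) := by
  intro h
  have := hP k (hk.trans (hji.le.trans hi)) i hi h
  obtain ⟨rfl, rfl⟩ : k = j ∧ i = j + 1 := by omega
  exact horient _ _ hback h

end NoForwardChord

/-- Let `P` be a directed path from `s = P 0` to `t = P n` in an oriented graph `G` with no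
forward chord, and suppose the subdigraph induced by `V(P)` contains a backward arc
`P i → P j` (with `j < i`), every such arc having head different from `s` (`1 ≤ j`).
Choose such an arc `P i₀ → P j₀` with `P j₀` as close to `s` as possible.  Then the initial
segment of `P` from `s` to `P j₀` together with the arc `P i₀ → P j₀` forms an induced
subdivision of `A⁺₂` with origin `s`. -/
theorem stmt12 {V : Type*} (G : V → V → Prop) (horient : ∀ a b, G a b → ¬ G b a)
    (n : ℕ) (P : ℕ → V)
    (hinj : ∀ i ≤ n, ∀ j ≤ n, P i = P j → i = j)
    (harc : ∀ i < n, G (P i) (P (i + 1)))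
    (hnofwd : ∀ i ≤ n, ∀ j ≤ n, G (P i) (P j) → j ≤ i + 1)
    (i₀ j₀ : ℕ) (hi₀ : i₀ ≤ n) (hj₀i₀ : j₀ < i₀) (hj₀ : 1 ≤ j₀)
    (hback : G (P i₀) (P j₀))
    (hmin : ∀ i ≤ n, ∀ j, j < i → G (P i) (P j) → j₀ ≤ j) :
    IsInducedA2Plus G (P 0) j₀ P (P i₀) := by
  have hP : NoForwardChord G n P := hnofwd
  have hj₀n : j₀ ≤ n := hj₀i₀.le.trans hi₀
  refine ⟨hj₀, rfl, fun i hi j hj => hinj i (hi.trans hj₀n) j (hj.trans hj₀n),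
    fun i hi => harc i (hi.trans_le hj₀n), fun i hi h => ?_, hback, fun i hi j hj h => ?_,
    fun i hi => hP.not_adj_tail_of_backward_adj horient hj₀i₀ hi₀ hback hi, fun i hi h => ?_⟩
  · have := hinj i₀ hi₀ i (hi.trans hj₀n) h
    omega
  · have hij : i ≤ j := by
      by_contra! hji
      have := hmin i (hi.trans hj₀n) j hji h
      omega
    exact hP.eq_succ_of_adj_of_le horient hij (hj.trans hj₀n) h
  · have := hmin i₀ hi₀ i (hi.trans_lt hj₀i₀) h
    omega
end

section
/- Let G be an oriented graph and s_3 s_2 an arc of G. Let G' be obtained from G by deleting all in-neighbours of a vertex s and all neighbours of s_3 except s_2 (assume s, s_2, s_3 survive and are distinct from each other appropriately). If G' contains a shortest directed path from s to s_2 of length ≥ 1, then G contains an induced subdivision of A^+_2 with origin s. -/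
/-!
Pass to a shortest `(s, s₂)`-path `Q` in `G'`; by minimality it has no forward chords. If it
has no backward chords either, it is induced in `G`, and `s₃`, which has no neighbour on `Q`
other than `s₂`, supplies the extra arc `s₃ → s₂`. Otherwise take a backward chord
`Q j → Q i` with `i` least: the segment `Q 0, …, Q i` is induced and `Q j` supplies the arc.
In both cases orientation rules out the arcs `Q (k + 1) → Q k`.
-/

section DiPath

variable {V : Type*} {G : V → V → Prop} {n : ℕ} {Q : ℕ → V}

structure IsDiPath (G : V → V → Prop) (n : ℕ) (Q : ℕ → V) : Prop where
  injOn : ∀ i ≤ n, ∀ j ≤ n, Q i = Q j → i = j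
  adj : ∀ i < n, G (Q i) (Q (i + 1))

structure IsInducedDiPath (G : V → V → Prop) (n : ℕ) (Q : ℕ → V) : Prop
    extends IsDiPath G n Q where
  eq_succ_of_adj : ∀ i ≤ n, ∀ j ≤ n, G (Q i) (Q j) → j = i + 1

theorem IsDiPath.mono {m : ℕ} (hQ : IsDiPath G n Q) (hm : m ≤ n) : IsDiPath G m Q :=
  ⟨fun i hi j hj => hQ.injOn i (by omega) j (by omega), fun i hi => hQ.adj i (by omega)⟩

theorem IsDiPath.shortcut (hQ : IsDiPath G n Q) {a d : ℕ} (hn : a + d + 1 ≤ n)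
    (hchord : G (Q a) (Q (a + d + 1))) :
    IsDiPath G (n - d) (fun m => if m ≤ a then Q m else Q (m + d)) := by
  constructor
  · intro i hi j hj hij
    by_cases hia : i ≤ a <;> by_cases hja : j ≤ a <;>
      simp only [hia, hja, if_true, if_false] at hij <;>
      have := hQ.injOn _ (by omega) _ (by omega) hij <;> omega
  · intro i hi
    by_cases hia : i + 1 ≤ a
    · simp only [hia, show i ≤ a by omega, if_true]
      exact hQ.adj i (by omega)
    · simp only [hia, if_false]
      rcases eq_or_ne i a with rfl | hne
      · simpa only [le_refl, if_true, Nat.add_right_comm] using hchord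
      · simp only [show ¬ i ≤ a by omega, if_false, Nat.add_right_comm]
        exact hQ.adj _ (by omega)

-- a shortest such path
theorem exists_isDiPath_no_forward_chord {u v : V} (P : V → Prop)
    (h : ∃ n Q, IsDiPath G n Q ∧ Q 0 = u ∧ Q n = v ∧ ∀ i ≤ n, P (Q i)) :
    ∃ n Q, IsDiPath G n Q ∧ Q 0 = u ∧ Q n = v ∧ (∀ i ≤ n, P (Q i)) ∧
      ∀ i j, j ≤ n → i + 2 ≤ j → ¬ G (Q i) (Q j) := by
  classical
  obtain ⟨Q, hQ, hQ0, hQn, hP⟩ := Nat.find_spec h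
  refine ⟨Nat.find h, Q, hQ, hQ0, hQn, hP, fun a b hb hab hchord => ?_⟩
  obtain ⟨d, rfl⟩ : ∃ d, b = a + d + 1 := ⟨b - a - 1, by omega⟩
  refine Nat.find_min h (m := Nat.find h - d) (by omega) ⟨_, hQ.shortcut hb hchord, ?_, ?_, ?_⟩
  · simpa using hQ0
  · simpa only [show ¬ Nat.find h - d ≤ a by omega, if_false, Nat.sub_add_cancel
      (show d ≤ Nat.find h by omega)] using hQn
  · intro i hi
    by_cases hia : i ≤ a
    · simpa only [hia, if_true] using hP i (by omega)
    · simpa only [hia, if_false] using hP (i + d) (by omega)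

theorem isInducedDiPath_of_no_chords (horient : ∀ a b, G a b → ¬ G b a)
    (hQ : IsDiPath G n Q) (hfwd : ∀ i j, j ≤ n → i + 2 ≤ j → ¬ G (Q i) (Q j))
    (hbwd : ∀ i j, j ≤ n → i + 2 ≤ j → ¬ G (Q j) (Q i)) : IsInducedDiPath G n Q := by
  refine ⟨hQ, fun i hi j hj hij => ?_⟩
  rcases lt_trichotomy j (i + 1) with hlt | heq | hgt
  · rcases Nat.lt_or_ge (j + 1) i with hlt' | hge
    · exact absurd hij (hbwd j i hi (by omega))
    · obtain rfl | rfl : i = j ∨ i = j + 1 := by omega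
      · exact absurd hij (horient _ _ hij)
      · exact absurd hij (horient _ _ (hQ.adj j (by omega)))
  · exact heq
  · exact absurd hij (hfwd i j hj (by omega))

theorem IsInducedDiPath.isInducedA2Plus {w : V} (hQ : IsInducedDiPath G n Q) (hn : 1 ≤ n)
    (hw : ∀ i ≤ n, w ≠ Q i) (hwn : G w (Q n)) (hto : ∀ i ≤ n, ¬ G (Q i) w)
    (hfrom : ∀ i < n, ¬ G w (Q i)) : IsInducedA2Plus G (Q 0) n Q w :=
  ⟨hn, rfl, hQ.injOn, hQ.adj, hw, hwn, hQ.eq_succ_of_adj, hto,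
    fun i hi hwi => by_contra fun hne => hfrom i (by omega) hwi⟩

-- cut the path at the least target `Q i` of a backward chord `Q j → Q i`
theorem exists_isInducedA2Plus_of_backward_chord (horient : ∀ a b, G a b → ¬ G b a)
    (hQ : IsDiPath G n Q) (hfwd : ∀ i j, j ≤ n → i + 2 ≤ j → ¬ G (Q i) (Q j))
    (hbwd : ∃ i j, i + 2 ≤ j ∧ j ≤ n ∧ G (Q j) (Q i)) (horigin : ∀ j ≤ n, ¬ G (Q j) (Q 0)) :
    ∃ m Q' w, IsInducedA2Plus G (Q 0) m Q' w := by
  classical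
  obtain ⟨j, hij, hjn, hchord⟩ := Nat.find_spec hbwd
  have hmin : ∀ k < Nat.find hbwd, ∀ l, k + 2 ≤ l → l ≤ n → ¬ G (Q l) (Q k) :=
    fun k hk l hkl hl hlk => Nat.find_min hbwd hk ⟨l, hkl, hl, hlk⟩
  have hpos : 1 ≤ Nat.find hbwd := by
    by_contra! h0
    exact horigin j hjn (by simpa [Nat.lt_one_iff.mp h0] using hchord)
  have hind : IsInducedDiPath G (Nat.find hbwd) Q :=
    isInducedDiPath_of_no_chords horient (hQ.mono (by omega))
      (fun k l hl hkl => hfwd k l (by omega) hkl)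
      (fun k l hl hkl => hmin k (by omega) l hkl (by omega))
  refine ⟨_, Q, Q j, hind.isInducedA2Plus hpos ?_ hchord ?_ ?_⟩
  · intro k hk hjk
    have := hQ.injOn j hjn k (by omega) hjk
    omega
  · exact fun k hk => hfwd k j hjn (by omega)
  · exact fun k hk => hmin k hk j (by omega) hjn

end DiPath

theorem stmt13_general {V : Type*} (G : V → V → Prop) (horient : ∀ a b, G a b → ¬ G b a)
    (s s₂ s₃ : V) (harc : G s₃ s₂)
    (hss₂ : s ≠ s₂) (hss₃ : s ≠ s₃) (hs₂s₃ : s₂ ≠ s₃)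
    (hpath : ∃ (n : ℕ) (Q : ℕ → V),
      Q 0 = s ∧ Q n = s₂ ∧
      (∀ i ≤ n, ∀ j ≤ n, Q i = Q j → i = j) ∧
      (∀ i < n, G (Q i) (Q (i + 1))) ∧
      -- the path lies in G', i.e. avoids the deleted vertices:
      (∀ i ≤ n, ¬ G (Q i) s) ∧
      (∀ i ≤ n, Q i ≠ s₂ → ¬ G (Q i) s₃ ∧ ¬ G s₃ (Q i))) :
    ∃ (n : ℕ) (Q : ℕ → V) (w : V), IsInducedA2Plus G s n Q w := by
  obtain ⟨n, Q, hQ0, hQn, hinj, hadj, hins, hins₃⟩ := hpath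
  obtain ⟨n, Q, hQ, hQ0, hQn, hG', hfwd⟩ :=
    exists_isDiPath_no_forward_chord (fun v => ¬ G v s ∧ (v ≠ s₂ → ¬ G v s₃ ∧ ¬ G s₃ v))
      ⟨n, Q, ⟨hinj, hadj⟩, hQ0, hQn, fun i hi => ⟨hins i hi, hins₃ i hi⟩⟩
  subst hQ0
  have hn : 1 ≤ n := Nat.one_le_iff_ne_zero.mpr fun h0 => hss₂ (by rw [← hQn, h0])
  have hne_s₂ : ∀ i < n, Q i ≠ s₂ := fun i hi h => by
    have := hQ.injOn i hi.le n le_rfl (h.trans hQn.symm)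
    omega
  by_cases hbwd : ∃ i j, i + 2 ≤ j ∧ j ≤ n ∧ G (Q j) (Q i)
  · exact exists_isInducedA2Plus_of_backward_chord horient hQ hfwd hbwd fun j hj => (hG' j hj).1
  push Not at hbwd
  refine ⟨n, Q, s₃, (isInducedDiPath_of_no_chords horient hQ hfwd
    fun i j hj hij => hbwd i j hij hj).isInducedA2Plus hn ?_ (hQn ▸ harc) ?_ ?_⟩
  · -- the predecessor of `s₃` on the path would be a neighbour of `s₃` other than `s₂`
    rintro i hi rfl
    obtain ⟨k, rfl⟩ : ∃ k, i = k + 1 :=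
      Nat.exists_eq_succ_of_ne_zero fun h0 => hss₃ (by rw [h0])
    exact ((hG' k (by omega)).2 (hne_s₂ k (by omega))).1 (hQ.adj k (by omega))
  · intro i hi h
    rcases Nat.lt_or_ge i n with hlt | hge
    · exact ((hG' i hi).2 (hne_s₂ i hlt)).1 h
    · exact horient _ _ harc (by rwa [show i = n by omega, hQn] at h)
  · exact fun i hi => ((hG' i hi.le).2 (hne_s₂ i hi)).2

/-- Let `G` be an oriented graph with an arc `s₃ → s₂` and a vertex `s` (with `s, s₂, s₃`
pairwise distinct), and let `G'` be obtained from `G` by deleting all in-neighbours of `s`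
and all neighbours of `s₃` except `s₂` (we assume `s, s₂, s₃` survive these deletions).
If `G'` contains a (shortest) directed path from `s` to `s₂` (necessarily of length ≥ 1),
then `G` contains an induced subdivision of `A⁺₂` with origin `s`. -/
theorem stmt13 {V : Type*} (G : V → V → Prop) (horient : ∀ a b, G a b → ¬ G b a)
    (s s₂ s₃ : V) (harc : G s₃ s₂)
    (hss₂ : s ≠ s₂) (hss₃ : s ≠ s₃) (hs₂s₃ : s₂ ≠ s₃)
    (hsurv₁ : ¬ G s s₃) (hsurv₂ : ¬ G s₃ s) (hsurv₃ : ¬ G s₂ s)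
    (hpath : ∃ (n : ℕ) (Q : ℕ → V),
      Q 0 = s ∧ Q n = s₂ ∧
      (∀ i ≤ n, ∀ j ≤ n, Q i = Q j → i = j) ∧
      (∀ i < n, G (Q i) (Q (i + 1))) ∧
      -- the path lies in G', i.e. avoids the deleted vertices:
      (∀ i ≤ n, ¬ G (Q i) s) ∧
      (∀ i ≤ n, Q i ≠ s₂ → ¬ G (Q i) s₃ ∧ ¬ G s₃ (Q i))) :
    ∃ (n : ℕ) (Q : ℕ → V) (w : V), IsInducedA2Plus G s n Q w :=
  stmt13_general G horient s s₂ s₃ harc hss₂ hss₃ hs₂s₃ hpath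
end

section
/- Let Y be a good (x,y_1,y_2)-switch in an oriented graph D, and let S be an induced subdivision of ST_4 in D (where ST_4 is the unique strong tournament on 4 vertices). Then the arc y_2 y_1 is not an arc of S. -/
/-- The strong tournament `ST₄` on 4 vertices: the directed cycle `α γ β δ α`
(`0 → 1 → 2 → 3 → 0`) together with the chords `α → β` (`0 → 2`) and `γ → δ` (`1 → 3`). -/
def ST4 : Fin 4 → Fin 4 → Prop := fun a b =>
  (a = 0 ∧ b = 1) ∨ (a = 1 ∧ b = 2) ∨ (a = 2 ∧ b = 3) ∨ (a = 3 ∧ b = 0) ∨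
  (a = 0 ∧ b = 2) ∨ (a = 1 ∧ b = 3)

/-- `{x, z, y₁, y₂}` is a good `(x, y₁, y₂)`-switch in `D`: the four vertices are distinct,
the arcs of `D` among them are exactly `xz, xy₁, zy₁, zy₂, y₂y₁`, every arc of `D` entering
the switch has head `x`, and every arc of `D` leaving it has tail `y₁` or `y₂`. -/
def IsGoodSwitch {V : Type*} (D : V → V → Prop) (x z y₁ y₂ : V) : Prop :=
  (x ≠ z ∧ x ≠ y₁ ∧ x ≠ y₂ ∧ z ≠ y₁ ∧ z ≠ y₂ ∧ y₁ ≠ y₂) ∧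
  (∀ a b : V, a ∈ ({x, z, y₁, y₂} : Set V) → b ∈ ({x, z, y₁, y₂} : Set V) →
    (D a b ↔ ((a = x ∧ b = z) ∨ (a = x ∧ b = y₁) ∨ (a = z ∧ b = y₁) ∨
      (a = z ∧ b = y₂) ∨ (a = y₂ ∧ b = y₁)))) ∧
  (∀ w : V, w ∉ ({x, z, y₁, y₂} : Set V) → ∀ u ∈ ({x, z, y₁, y₂} : Set V), D w u → u = x) ∧
  (∀ u ∈ ({x, z, y₁, y₂} : Set V), ∀ w : V, w ∉ ({x, z, y₁, y₂} : Set V) → D u w →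
    u = y₁ ∨ u = y₂)

def InDegreeLeTwo {W : Type*} (G : W → W → Prop) : Prop :=
  ∀ w a b c, G a w → G b w → G c w → a = b ∨ a = c ∨ b = c

namespace IsSubdivisionVia

variable {U W : Type*} {D : U → U → Prop} {S : W → W → Prop}
  {φ : U → W} {n : ∀ u v, D u v → ℕ} {p : ∀ u v (h : D u v), Fin (n u v h + 1) → W}

lemma eq_branch_or_internal (hs : IsSubdivisionVia D S φ n p) (w : W) :
    (∃ v, w = φ v) ∨ ∃ u v, ∃ h : D u v, ∃ i : Fin (n u v h + 1),
      0 < i.val ∧ i.val < n u v h ∧ p u v h i = w := by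
  obtain ⟨-, -, hends, -, -, -, hcov, -⟩ := hs
  rcases hcov w with ⟨v, rfl⟩ | ⟨u, v, h, i, rfl⟩
  · exact .inl ⟨v, rfl⟩
  · rcases Nat.eq_zero_or_pos i.val with h0 | h0
    · exact .inl ⟨u, by rw [show i = 0 from Fin.ext h0, (hends u v h).1]⟩
    · rcases (Nat.lt_succ_iff.mp i.isLt).eq_or_lt with hl | hl
      · exact .inl ⟨v, by rw [show i = Fin.last _ from Fin.ext hl, (hends u v h).2]⟩
      · exact .inr ⟨u, v, h, i, h0, hl, rfl⟩

lemma adj_step (hs : IsSubdivisionVia D S φ n p) {u v : U} (h : D u v) (j : Fin (n u v h)) :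
    S (p u v h j.castSucc) (p u v h j.succ) :=
  let ⟨_, _, _, _, _, _, _, harc⟩ := hs
  (harc _ _).2 ⟨u, v, h, j, rfl, rfl⟩

lemma eq_pred_of_adj_internal (hs : IsSubdivisionVia D S φ n p) {u v : U} {h : D u v}
    {i : Fin (n u v h + 1)} (h0 : 0 < i.val) (h1 : i.val < n u v h) {a : W}
    (ha : S a (p u v h i)) : a = p u v h ⟨i.val - 1, by omega⟩ := by
  obtain ⟨-, -, hends, -, hint, hdisj, -, harc⟩ := hs
  obtain ⟨u', v', h', j, rfl, hj⟩ := (harc _ _).1 ha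
  rcases (Nat.succ_le_of_lt j.isLt).eq_or_lt with hl | hl
  · rw [show j.succ = Fin.last _ from Fin.ext hl, (hends u' v' h').2] at hj
    exact absurd hj.symm (hint u v h i h0 h1 v')
  · obtain ⟨rfl, rfl, hij⟩ :=
      hdisj u v h u' v' h' i j.succ h0 h1 j.succ_pos hl hj.symm
    congr 1
    ext
    simp only [Fin.val_succ] at hij
    simp only [Fin.val_castSucc]
    omega

lemma exists_eq_penultimate_of_adj_branch (hs : IsSubdivisionVia D S φ n p) {a : W} {v : U}
    (ha : S a (φ v)) : ∃ u, ∃ h : D u v, a = p u v h ⟨n u v h - 1, by omega⟩ := by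
  obtain ⟨hφ, -, hends, -, hint, -, -, harc⟩ := hs
  obtain ⟨u, v', h, j, rfl, hj⟩ := (harc _ _).1 ha
  rcases (Nat.succ_le_of_lt j.isLt).eq_or_lt with hl | hl
  · rw [show j.succ = Fin.last _ from Fin.ext hl, (hends u v' h).2] at hj
    obtain rfl := hφ hj
    refine ⟨u, h, congrArg _ (Fin.ext ?_)⟩
    simp only [Fin.val_castSucc]
    omega
  · exact absurd hj (hint u v' h j.succ j.succ_pos hl v)

lemma inDegreeLeTwo (hs : IsSubdivisionVia D S φ n p) (hD : InDegreeLeTwo D) :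
    InDegreeLeTwo S := by
  intro w a b c ha hb hc
  rcases hs.eq_branch_or_internal w with ⟨v, rfl⟩ | ⟨u, v, h, i, h0, h1, rfl⟩
  · obtain ⟨ua, hua, rfl⟩ := hs.exists_eq_penultimate_of_adj_branch ha
    obtain ⟨ub, hub, rfl⟩ := hs.exists_eq_penultimate_of_adj_branch hb
    obtain ⟨uc, huc, rfl⟩ := hs.exists_eq_penultimate_of_adj_branch hc
    rcases hD v ua ub uc hua hub huc with rfl | rfl | rfl <;> simp
  · exact .inl ((hs.eq_pred_of_adj_internal h0 h1 ha).trans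
      (hs.eq_pred_of_adj_internal h0 h1 hb).symm)

lemma exists_adj_of_pos (hs : IsSubdivisionVia D S φ n p) {u v : U} (h : D u v)
    {i : Fin (n u v h + 1)} (hi : 0 < i.val) : ∃ a, S a (p u v h i) := by
  have hj : (⟨i.val - 1, by omega⟩ : Fin (n u v h)).succ = i := Fin.ext (by simp; omega)
  exact ⟨_, hj ▸ hs.adj_step h _⟩

lemma exists_adj (hs : IsSubdivisionVia D S φ n p) (hD : ∀ v, ∃ u, D u v) (w : W) :
    ∃ a, S a w := by
  rcases hs.eq_branch_or_internal w with ⟨v, rfl⟩ | ⟨u, v, h, i, h0, -, rfl⟩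
  · obtain ⟨u, h⟩ := hD v
    rw [← (hs.2.2.1 u v h).2]
    exact hs.exists_adj_of_pos h (hs.2.1 u v h)
  · exact hs.exists_adj_of_pos h h0

end IsSubdivisionVia

namespace IsSubdivision

variable {U W : Type*} {D : U → U → Prop} {S : W → W → Prop}

lemma inDegreeLeTwo (hs : IsSubdivision D S) (hD : InDegreeLeTwo D) : InDegreeLeTwo S :=
  let ⟨_, _, _, hs⟩ := hs
  hs.inDegreeLeTwo hD

lemma exists_adj (hs : IsSubdivision D S) (hD : ∀ v, ∃ u, D u v) (w : W) : ∃ a, S a w :=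
  let ⟨_, _, _, hs⟩ := hs
  hs.exists_adj hD w

end IsSubdivision

lemma ST4_inDegreeLeTwo : InDegreeLeTwo ST4 := by
  unfold InDegreeLeTwo ST4
  omega

lemma ST4_exists_adj : ∀ v, ∃ u, ST4 u v := by
  unfold ST4
  decide

namespace IsGoodSwitch

variable {V : Type*} {D : V → V → Prop} {x z y₁ y₂ : V}

lemma mem_of_adj (hsw : IsGoodSwitch D x z y₁ y₂) {a u : V}
    (hu : u ∈ ({x, z, y₁, y₂} : Set V)) (hux : u ≠ x) (h : D a u) :
    a ∈ ({x, z, y₁, y₂} : Set V) := by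
  by_contra ha
  exact hux (hsw.2.2.1 a ha u hu h)

lemma eq_x_of_adj_z (hsw : IsGoodSwitch D x z y₁ y₂) {a : V} (h : D a z) : a = x := by
  have hiff := hsw.2.1 a z (hsw.mem_of_adj (by simp) hsw.1.1.symm h) (by simp)
  obtain ⟨hxz, -, -, hzy₁, hzy₂, -⟩ := hsw.1
  grind

lemma eq_z_of_adj_y₂ (hsw : IsGoodSwitch D x z y₁ y₂) {a : V} (h : D a y₂) : a = z := by
  have hiff := hsw.2.1 a y₂ (hsw.mem_of_adj (by simp) hsw.1.2.2.1.symm h) (by simp)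
  obtain ⟨-, -, -, -, hzy₂, hy₁₂⟩ := hsw.1
  grind

lemma adj_x_y₁ (hsw : IsGoodSwitch D x z y₁ y₂) : D x y₁ :=
  (hsw.2.1 x y₁ (by simp) (by simp)).2 (by simp)

lemma adj_z_y₁ (hsw : IsGoodSwitch D x z y₁ y₂) : D z y₁ :=
  (hsw.2.1 z y₁ (by simp) (by simp)).2 (by simp)

lemma adj_y₂_y₁ (hsw : IsGoodSwitch D x z y₁ y₂) : D y₂ y₁ :=
  (hsw.2.1 y₂ y₁ (by simp) (by simp)).2 (by simp)

end IsGoodSwitch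

lemma mem_of_forall_adj_eq {V : Type*} {D : V → V → Prop} {X : Set V}
    (hadj : ∀ w : X, ∃ a : X, D a w) {w u : V} (hw : w ∈ X) (hu : ∀ a, D a w → a = u) :
    u ∈ X := by
  obtain ⟨a, ha⟩ := hadj ⟨w, hw⟩
  exact hu a ha ▸ a.2

theorem stmt14_general {V : Type} (D : V → V → Prop)
    (x z y₁ y₂ : V) (hswitch : IsGoodSwitch D x z y₁ y₂)
    (X : Set V) (hS : IsSubdivision ST4 (fun a b : X => D a.1 b.1)) :
    ¬ (y₂ ∈ X ∧ y₁ ∈ X) := by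
  rintro ⟨hy₂, hy₁⟩
  have hadj := hS.exists_adj ST4_exists_adj
  have hz : z ∈ X := mem_of_forall_adj_eq hadj hy₂ fun _ => hswitch.eq_z_of_adj_y₂
  have hx : x ∈ X := mem_of_forall_adj_eq hadj hz fun _ => hswitch.eq_x_of_adj_z
  obtain ⟨hxz, -, hxy₂, -, hzy₂, -⟩ := hswitch.1
  rcases hS.inDegreeLeTwo ST4_inDegreeLeTwo ⟨y₁, hy₁⟩ ⟨x, hx⟩ ⟨z, hz⟩ ⟨y₂, hy₂⟩
      hswitch.adj_x_y₁ hswitch.adj_z_y₁ hswitch.adj_y₂_y₁ with h | h | h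
  · exact hxz (congrArg Subtype.val h)
  · exact hxy₂ (congrArg Subtype.val h)
  · exact hzy₂ (congrArg Subtype.val h)

/-- Let `{x, z, y₁, y₂}` be a good `(x, y₁, y₂)`-switch in an oriented graph `D`, and let
`X` induce a subdivision of `ST₄` in `D`.  Then the arc `y₂ → y₁` is not an arc of this
induced subdivision, i.e. `y₂` and `y₁` do not both belong to `X`. -/
theorem stmt14 {V : Type} (D : V → V → Prop) (horient : ∀ a b, D a b → ¬ D b a)
    (x z y₁ y₂ : V) (hswitch : IsGoodSwitch D x z y₁ y₂)
    (X : Set V) (hS : IsSubdivision ST4 (fun a b : X => D a.1 b.1)) :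
    ¬ (y₂ ∈ X ∧ y₁ ∈ X) :=
  stmt14_general D x z y₁ y₂ hswitch X hS
end

section
/- Let D be a digraph, C a directed cycle of length at least 4 in D, and uv an arc of C where u has total degree 2 in D. Then the digraph D − uv (D with arc uv deleted) has strictly fewer induced directed cycles of length at least 4 than D. -/
/-!
A directed cycle through `u` uses one arc into `u` and one arc out of `u`. If `u` has total
degree 2 and `uv` is an arc, then after deleting `uv` the vertex `u` has no out-arc left but
still an in-arc, so no directed cycle of `D - uv` passes through `u`. Hence an induced cycle of
`D - uv` avoids the only pair `(u, v)` where the two digraphs differ and is induced in `D`, while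
an induced cycle of `D` through `uv` is lost.
-/

/-- A directed cycle in the digraph `G`: vertices `v 0, …, v (n-1)` (all distinct),
`v n = v 0`, with arcs `v i → v (i+1)` for all `i < n`, and `n ≥ 2`. -/
def IsDiCycle {V : Type*} (G : V → V → Prop) (n : ℕ) (v : ℕ → V) : Prop :=
  2 ≤ n ∧ v n = v 0 ∧ (∀ i < n, ∀ j < n, v i = v j → i = j) ∧ ∀ i < n, G (v i) (v (i + 1))

/-- An induced directed cycle: a directed cycle with no chords. -/
def IsInducedDiCycle {V : Type*} (G : V → V → Prop) (n : ℕ) (v : ℕ → V) : Prop :=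
  IsDiCycle G n v ∧ ∀ i < n, ∀ j < n, G (v i) (v j) → j = (i + 1) % n

/-- In-degree of a vertex in a digraph. -/
noncomputable def inDeg {V : Type*} (G : V → V → Prop) (v : V) : ℕ := {u | G u v}.ncard

/-- Out-degree of a vertex in a digraph. -/
noncomputable def outDeg {V : Type*} (G : V → V → Prop) (v : V) : ℕ := {u | G v u}.ncard

/-- The vertex sets of the induced directed cycles of a digraph. -/
def InducedCycleSets {V : Type*} (G : V → V → Prop) : Set (Set V) :=
  {X | ∃ n v, IsInducedDiCycle G n v ∧ X = {x | ∃ i < n, v i = x}}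

/-- The vertex sets of the induced directed cycles of length at least 4 of a digraph. -/
def LongInducedCycleSets {V : Type*} (G : V → V → Prop) : Set (Set V) :=
  {X | ∃ n v, 4 ≤ n ∧ IsInducedDiCycle G n v ∧ X = {x | ∃ i < n, v i = x}}

def deleteArc {V : Type*} (G : V → V → Prop) (u v : V) : V → V → Prop :=
  fun a b => G a b ∧ ¬(a = u ∧ b = v)

section

variable {V : Type*} {G H : V → V → Prop} {n : ℕ} {w : ℕ → V}

theorem IsDiCycle.mono (hGH : ∀ a b, G a b → H a b) (hc : IsDiCycle G n w) :
    IsDiCycle H n w :=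
  ⟨hc.1, hc.2.1, hc.2.2.1, fun i hi => hGH _ _ (hc.2.2.2 i hi)⟩

theorem IsDiCycle.exists_arc_into (hc : IsDiCycle G n w) {i : ℕ} (hi : i < n) :
    ∃ x, G x (w i) := by
  obtain ⟨hn, hclosed, -, harc⟩ := hc
  rcases Nat.eq_zero_or_pos i with rfl | hpos
  · refine ⟨w (n - 1), ?_⟩
    simpa only [Nat.sub_add_cancel (by omega : 1 ≤ n), hclosed] using harc (n - 1) (by omega)
  · refine ⟨w (i - 1), ?_⟩
    simpa only [Nat.sub_add_cancel hpos] using harc (i - 1) (by omega)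

theorem two_le_outDeg [Finite V] {u a b : V} (ha : G u a) (hb : G u b) (hab : a ≠ b) :
    2 ≤ outDeg G u :=
  calc 2 = ({a, b} : Set V).ncard := (Set.ncard_pair hab).symm
    _ ≤ outDeg G u := Set.ncard_le_ncard (by rintro x (rfl | rfl) <;> assumption) (Set.toFinite _)

theorem inDeg_pos [Finite V] {u x : V} (hx : G x u) : 0 < inDeg G u :=
  (Set.ncard_pos (Set.toFinite _)).mpr ⟨x, hx⟩

end

section

variable {V : Type*} [Finite V] {D : V → V → Prop} {u v : V} {n : ℕ} {w : ℕ → V}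

theorem IsDiCycle.ne_of_deleteArc (huv : D u v) (hdeg : inDeg D u + outDeg D u = 2)
    (hc : IsDiCycle (deleteArc D u v) n w) {i : ℕ} (hi : i < n) : w i ≠ u := by
  intro hwi
  obtain ⟨hout, hne⟩ := hc.2.2.2 i hi
  rw [hwi] at hout hne
  have : 2 ≤ outDeg D u := two_le_outDeg huv hout fun h => hne ⟨rfl, h.symm⟩
  obtain ⟨x, hx⟩ := (hc.mono fun _ _ h => h.1).exists_arc_into hi
  have : 0 < inDeg D u := inDeg_pos (hwi ▸ hx)
  omega

theorem IsInducedDiCycle.of_deleteArc (huv : D u v) (hdeg : inDeg D u + outDeg D u = 2)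
    (hc : IsInducedDiCycle (deleteArc D u v) n w) : IsInducedDiCycle D n w := by
  refine ⟨hc.1.mono fun _ _ h => h.1, fun i hi j hj hij => hc.2 i hi j hj ⟨hij, ?_⟩⟩
  exact fun h => hc.1.ne_of_deleteArc huv hdeg hi h.1

theorem inducedCycleSets_deleteArc_subset (huv : D u v) (hdeg : inDeg D u + outDeg D u = 2) :
    InducedCycleSets (deleteArc D u v) ⊆ InducedCycleSets D := by
  rintro X ⟨m, w', hc, rfl⟩
  exact ⟨m, w', hc.of_deleteArc huv hdeg, rfl⟩

theorem longInducedCycleSets_deleteArc_ssubset (huv : D u v)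
    (hdeg : inDeg D u + outDeg D u = 2) (hn : 4 ≤ n) (hc : IsInducedDiCycle D n w) {i : ℕ}
    (hi : i < n) (hwi : w i = u) :
    LongInducedCycleSets (deleteArc D u v) ⊂ LongInducedCycleSets D := by
  refine (Set.ssubset_iff_of_subset ?_).mpr ⟨_, ⟨n, w, hn, hc, rfl⟩, ?_⟩
  · rintro X ⟨m, w', hm, hc', rfl⟩
    exact ⟨m, w', hm, hc'.of_deleteArc huv hdeg, rfl⟩
  · rintro ⟨m, w', -, hc', hX⟩
    obtain ⟨j, hj, hwj⟩ : u ∈ {x | ∃ j < m, w' j = x} := hX ▸ ⟨i, hi, hwi⟩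
    exact hc'.1.ne_of_deleteArc huv hdeg hj hwj

end

/-- Let `D` be a digraph with an arc `u → v` where `u` has total degree 2, and let `D'` be
obtained by deleting the arc `uv`.  Then deleting `uv` creates no new induced directed
cycles (every induced directed cycle of `D'` is an induced directed cycle of `D`), and if
some induced directed cycle of `D` of length at least 4 passes through the arc `uv`, then
`D'` has strictly fewer induced directed cycles of length at least 4 than `D`. -/
theorem stmt16 {V : Type*} [Fintype V] (D : V → V → Prop) (u v : V) (huv : D u v)
    (hdeg : inDeg D u + outDeg D u = 2)
    (D' : V → V → Prop) (hD' : D' = fun a b => D a b ∧ ¬(a = u ∧ b = v)) :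
    InducedCycleSets D' ⊆ InducedCycleSets D ∧
    ((∃ n w i, 4 ≤ n ∧ IsInducedDiCycle D n w ∧ i < n ∧ w i = u ∧ w ((i + 1) % n) = v) →
      (LongInducedCycleSets D').ncard < (LongInducedCycleSets D).ncard) := by
  obtain rfl : D' = deleteArc D u v := hD'
  refine ⟨inducedCycleSets_deleteArc_subset huv hdeg, ?_⟩
  rintro ⟨n, w, i, hn, hc, hi, hwi, -⟩
  exact Set.ncard_lt_ncard (longInducedCycleSets_deleteArc_ssubset huv hdeg hn hc hi hwi)
    (Set.toFinite _)
end
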